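/- arXiv:1804.04373 — 9 statements merged into one kernel-verified Lean document; each statement's English description precedes it below -/
import Mathlib

section
/- Let C be a linear code of dimension k over GF(q) whose set of distinct weights has size (q^k-1)/(q-1)+1, let m be the maximum weight of a codeword of C, and suppose there exists a vector x not in C such that the Hamming distances d(c,x) are pairwise distinct as c ranges over all q^k codewords of C. Then the code of dimension k+1 generated by the matrix obtained from a generator matrix G of C by appending m zero columns to G and adding the row (x | 1 ... 1) (with m ones) has exactly (q^{k+1}-1)/(q-1)+1 distinct weights. -/
/-- Pad a vector with `m` zeros at the end. -/
def padZeros {F : Type*} [Zero F] (m : ℕ) {n : ℕ} (v : Fin n → F) : Fin (n + m) → F :=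
  Fin.append v 0

/-!
For `c ∈ C` and `α ≠ 0` the word `(c + α x | α … α)` of the extended code has weight
`wt (c + α x) + m = d (-α⁻¹ c, x) + m`, while the words with `α = 0` are the words of `C` padded
with zeros. So the weight set of the extended code is the weight set of `C`, all `≤ m`, together
with the `q ^ k` values `d (c, x) + m ≥ m + 1` (as `x ∉ C`), which are distinct by hypothesis.
Counting gives
`(q ^ k - 1) / (q - 1) + 1 + q ^ k = (q ^ (k + 1) - 1) / (q - 1) + 1`.
-/

open Module Submodule

namespace Fin

variable {α : Type*} {n m : ℕ}

theorem append_add_append [Add α] (u u' : Fin n → α) (v v' : Fin m → α) :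
    append u v + append u' v' = append (u + u') (v + v') := by
  ext i
  refine addCases (fun i => ?_) (fun i => ?_) i <;> simp

theorem smul_append {R : Type*} [SMul R α] (c : R) (u : Fin n → α) (v : Fin m → α) :
    c • append u v = append (c • u) (c • v) := by
  ext i
  refine addCases (fun i => ?_) (fun i => ?_) i <;> simp

end Fin

section Hamming

variable {F : Type*} [DecidableEq F]

theorem hammingNorm_append [Zero F] {n m : ℕ} (u : Fin n → F) (v : Fin m → F) :
    hammingNorm (Fin.append u v) = hammingNorm u + hammingNorm v := by
  simp only [hammingNorm, Finset.card_filter, Fin.sum_univ_add, Fin.append_left, Fin.append_right]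

variable [Field F] {ι : Type*} [Fintype ι]

theorem hammingNorm_smul_of_ne_zero {α : F} (hα : α ≠ 0) (v : ι → F) :
    hammingNorm (α • v) = hammingNorm v :=
  hammingNorm_smul (fun _ => IsSMulRegular.of_ne_zero hα) v

theorem hammingNorm_smul_one (α : F) :
    hammingNorm (α • 1 : ι → F) = if α = 0 then 0 else Fintype.card ι := by
  split_ifs with hα
  · simp [hα]
  · rw [hammingNorm_smul_of_ne_zero hα]
    simp [hammingNorm]

theorem hammingNorm_add_smul_eq_hammingDist {α : F} (hα : α ≠ 0) (c x : ι → F) :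
    hammingNorm (c + α • x) = hammingDist (-(α⁻¹ • c)) x := by
  rw [hammingDist_eq_hammingNorm, neg_neg,
    show α⁻¹ • c + x = α⁻¹ • (c + α • x) by rw [smul_add, smul_smul, inv_mul_cancel₀ hα, one_smul],
    hammingNorm_smul_of_ne_zero (inv_ne_zero hα)]

end Hamming

def padZerosₗ (F : Type*) [Semiring F] (n m : ℕ) : (Fin n → F) →ₗ[F] (Fin (n + m) → F) where
  toFun := padZeros m
  map_add' u v := by simp [padZeros, Fin.append_add_append]
  map_smul' c v := by simp [padZeros, Fin.smul_append]

theorem padZeros_injective {F : Type*} [Zero F] (m : ℕ) {n : ℕ} :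
    Function.Injective (padZeros (F := F) m (n := n)) := by
  intro u v h
  ext i
  simpa [padZeros] using congrFun h (Fin.castAdd m i)

section ExtendedCode

variable {F : Type*} [Field F] {n m : ℕ}

/-- The code spanned by the rows of `[G 0; x 1]`, where `G` generates `C` and `0`, `1` have `m`
columns. -/
def extendedCode (C : Submodule F (Fin n → F)) (x : Fin n → F) (m : ℕ) :
    Submodule F (Fin (n + m) → F) :=
  span F (padZeros m '' (C : Set (Fin n → F)) ∪ {Fin.append x 1})

variable {C : Submodule F (Fin n → F)} {x : Fin n → F}

theorem extendedCode_eq_sup :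
    extendedCode C x m = C.map (padZerosₗ F n m) ⊔ span F {Fin.append x 1} := by
  have himage : padZeros m '' (C : Set (Fin n → F)) = padZerosₗ F n m '' C := rfl
  rw [extendedCode, span_union, himage, span_image, span_eq]

theorem mem_extendedCode_iff {z : Fin (n + m) → F} :
    z ∈ extendedCode C x m ↔ ∃ c ∈ C, ∃ α : F, z = Fin.append (c + α • x) (α • 1) := by
  have hsplit (c : Fin n → F) (α : F) :
      padZeros m c + α • Fin.append x 1 = Fin.append (c + α • x) (α • 1) := by
    rw [padZeros, Fin.smul_append, Fin.append_add_append, zero_add]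
  simp only [extendedCode_eq_sup, mem_sup, mem_map, mem_span_singleton]
  constructor
  · rintro ⟨_, ⟨c, hc, rfl⟩, _, ⟨α, rfl⟩, rfl⟩
    exact ⟨c, hc, α, hsplit c α⟩
  · rintro ⟨c, hc, α, rfl⟩
    exact ⟨_, ⟨c, hc, rfl⟩, _, ⟨α, rfl⟩, hsplit c α⟩

theorem finrank_extendedCode (hx : x ∉ C) :
    finrank F (extendedCode C x m) = finrank F C + 1 := by
  have hy : Fin.append x 1 ∉ C.map (padZerosₗ F n m) := by
    rintro ⟨c, hc, hcx : padZeros m c = Fin.append x 1⟩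
    obtain rfl : c = x := by
      ext i
      simpa [padZeros] using congrFun hcx (Fin.castAdd m i)
    exact hx hc
  rw [extendedCode_eq_sup, finrank_sup_span_singleton hy,
    (equivMapOfInjective (padZerosₗ F n m) (padZeros_injective m) C).finrank_eq]

variable [DecidableEq F]

theorem image_hammingNorm_extendedCode :
    hammingNorm '' (extendedCode C x m : Set (Fin (n + m) → F)) =
      hammingNorm '' (C : Set (Fin n → F)) ∪ (hammingDist · x + m) '' (C : Set (Fin n → F)) := by
  have hnorm (c : Fin n → F) (α : F) :
      hammingNorm (Fin.append (c + α • x) (α • 1 : Fin m → F)) =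
        hammingNorm (c + α • x) + if α = 0 then 0 else m := by
    rw [hammingNorm_append, hammingNorm_smul_one, Fintype.card_fin]
  ext w
  simp only [Set.mem_image, SetLike.mem_coe, mem_extendedCode_iff, Set.mem_union]
  constructor
  · rintro ⟨_, ⟨c, hc, α, rfl⟩, rfl⟩
    rw [hnorm]
    by_cases hα : α = 0
    · exact Or.inl ⟨c, hc, by simp [hα]⟩
    · refine Or.inr ⟨-(α⁻¹ • c), C.neg_mem (C.smul_mem _ hc), ?_⟩
      rw [if_neg hα, hammingNorm_add_smul_eq_hammingDist hα]
  · rintro (⟨c, hc, rfl⟩ | ⟨c, hc, rfl⟩)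
    · exact ⟨_, ⟨c, hc, 0, rfl⟩, by rw [hnorm]; simp⟩
    · refine ⟨_, ⟨-c, C.neg_mem hc, 1, rfl⟩, ?_⟩
      rw [hnorm, if_neg one_ne_zero, hammingNorm_add_smul_eq_hammingDist one_ne_zero]
      simp

theorem disjoint_image_hammingNorm_image_hammingDist_add
    (hm : ∀ c ∈ C, hammingNorm c ≤ m) (hx : x ∉ C) :
    Disjoint (hammingNorm '' (C : Set (Fin n → F))) ((hammingDist · x + m) '' (C : Set _)) := by
  rw [Set.disjoint_left]
  rintro _ ⟨c, hc, rfl⟩ ⟨c', hc', hcc' : hammingDist c' x + m = hammingNorm c⟩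
  have hc'x : hammingDist c' x ≠ 0 := hammingDist_ne_zero.mpr fun h => hx (h ▸ hc')
  have := hm c hc
  omega

theorem ncard_image_hammingDist_add [Fintype F]
    (hdist : ∀ c₁ ∈ C, ∀ c₂ ∈ C, c₁ ≠ c₂ → hammingDist c₁ x ≠ hammingDist c₂ x) :
    ((hammingDist · x + m) '' (C : Set (Fin n → F))).ncard = Fintype.card F ^ finrank F C := by
  have hinj : Set.InjOn (hammingDist · x + m) (C : Set (Fin n → F)) := by
    intro c₁ hc₁ c₂ hc₂ h
    by_contra hne
    exact hdist c₁ hc₁ c₂ hc₂ hne (by simpa using h)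
  rw [hinj.ncard_image, ← Nat.card_coe_set_eq, SetLike.coe_sort_coe,
    natCard_eq_pow_finrank (K := F), Nat.card_eq_fintype_card]

end ExtendedCode

theorem extension_is_MWS {F : Type*} [Field F] [Fintype F] [DecidableEq F] {n k m : ℕ}
    (C : Submodule F (Fin n → F)) (hk : Module.finrank F C = k)
    (hw : {w : ℕ | ∃ c ∈ C, hammingNorm c = w}.ncard
        = (Fintype.card F ^ k - 1) / (Fintype.card F - 1) + 1)
    (hm : IsGreatest {w : ℕ | ∃ c ∈ C, hammingNorm c = w} m)
    (x : Fin n → F) (hx : x ∉ C)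
    (hdist : ∀ c₁ ∈ C, ∀ c₂ ∈ C, c₁ ≠ c₂ → hammingDist c₁ x ≠ hammingDist c₂ x) :
    Module.finrank F
      (Submodule.span F (padZeros m '' (C : Set (Fin n → F)) ∪ {Fin.append x 1})) = k + 1 ∧
    {w : ℕ | ∃ z ∈ Submodule.span F
        (padZeros m '' (C : Set (Fin n → F)) ∪ {Fin.append x 1}), hammingNorm z = w}.ncard
      = (Fintype.card F ^ (k + 1) - 1) / (Fintype.card F - 1) + 1 := by
  refine ⟨hk ▸ finrank_extendedCode hx, ?_⟩
  have hq : 2 ≤ Fintype.card F := Fintype.one_lt_card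
  have hdisj := disjoint_image_hammingNorm_image_hammingDist_add
    (fun c hc => hm.2 ⟨c, hc, rfl⟩) hx
  change (hammingNorm '' (extendedCode C x m : Set (Fin (n + m) → F))).ncard = _
  rw [image_hammingNorm_extendedCode, Set.ncard_union_eq hdisj (Set.toFinite _) (Set.toFinite _)]
  change {w : ℕ | ∃ c ∈ C, hammingNorm c = w}.ncard + _ = _
  rw [hw, ncard_image_hammingDist_add hdist, hk, ← Nat.geomSum_eq hq, ← Nat.geomSum_eq hq,
    Finset.sum_range_succ]
  ring
end

section
/- Let q ≥ 3 be a prime power and C a linear code of dimension k over GF(q) of length n, and let x ∈ GF(q)^n with x ∉ C such that the number of distinct Hamming distances from x to codewords of C is strictly less than q^k. Then there exists a linear code C' of dimension k (namely C with each coordinate tripled) and a vector x' ∉ C' such that the number of distinct Hamming distances from x' to codewords of C' is strictly greater than the number of distinct Hamming distances from x to codewords of C. -/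
/-!
Since fewer than `q ^ k = |C|` distances occur, two distinct codewords `c₁, c₂` are at the same
distance `d` from `x`; choose a coordinate `i` where they differ, with `c₁ i ≠ x i`. Let `x'` be
the tripled `x` with one copy of coordinate `i` changed to `c₁ i`. A tripled codeword `c` is then
at distance `3 d(c, x) - [c i ≠ x i] + [c i ≠ c₁ i] ∈ {3d - 1, 3d, 3d + 1}` from `x'`
(here `d ≥ 1` because `x ∉ C`), so `m ↦ (m + 1) / 3` maps the new distance set onto the old one.
This map is not injective: the tripled `c₁` is at distance `3d - 1`, the tripled `c₂` at `3d` or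
`3d + 1`.
-/

/-- The linear map tripling each coordinate of a vector. -/
def tripleMap (F : Type*) [Field F] (n : ℕ) : (Fin n → F) →ₗ[F] (Fin (3 * n) → F) where
  toFun v := fun i => v ⟨i.1 / 3, by omega⟩
  map_add' _ _ := rfl
  map_smul' _ _ := rfl

open Finset Function

theorem Set.ncard_image_lt_of_not_injOn {α β : Type*} {f : α → β} {s : Set α} (hs : s.Finite)
    (h : ¬ s.InjOn f) : (f '' s).ncard < s.ncard :=
  (Set.ncard_image_le hs).lt_of_ne fun heq => h (Set.injOn_of_ncard_image_eq heq hs)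

theorem hammingDist_update_add {ι : Type*} [Fintype ι] [DecidableEq ι] {β : ι → Type*}
    [∀ i, DecidableEq (β i)] (y z : ∀ i, β i) (j : ι) (v : β j) :
    hammingDist y (update z j v) + (if y j = z j then 0 else 1) =
      hammingDist y z + (if y j = v then 0 else 1) := by
  simp only [hammingDist, card_filter]
  rw [← add_sum_erase _ _ (mem_univ j), ← add_sum_erase _ _ (mem_univ j),
    sum_congr rfl fun i hi => by rw [update_of_ne (ne_of_mem_erase hi)], update_self]
  split_ifs <;> grind

section Tripling

variable {F : Type*} [Field F] {n : ℕ}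

theorem tripleMap_apply_three_mul (y : Fin n → F) (i : Fin n) :
    tripleMap F n y ⟨3 * i, by omega⟩ = y i :=
  congrArg y (Fin.ext (by simp))

variable [DecidableEq F]

theorem hammingDist_tripleMap (c x : Fin n → F) :
    hammingDist (tripleMap F n c) (tripleMap F n x) = 3 * hammingDist c x := by
  let e : Fin n × Fin 3 ≃ Fin (3 * n) := finProdFinEquiv.trans (finCongr (Nat.mul_comm n 3))
  have he (y : Fin n → F) (p : Fin n × Fin 3) : tripleMap F n y (e p) = y p.1 :=
    congrArg y (Fin.ext (by simp [e]; omega))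
  simp only [hammingDist, card_filter]
  rw [← e.sum_comp, Fintype.sum_prod_type]
  simp only [he, sum_const, card_univ, Fintype.card_fin, smul_eq_mul, mul_sum]

theorem hammingDist_tripleMap_update (c x : Fin n → F) (i : Fin n) (v : F) :
    hammingDist (tripleMap F n c) (update (tripleMap F n x) ⟨3 * i, by omega⟩ v) +
        (if c i = x i then 0 else 1) =
      3 * hammingDist c x + (if c i = v then 0 else 1) := by
  simpa only [tripleMap_apply_three_mul, hammingDist_tripleMap] using
    hammingDist_update_add (tripleMap F n c) (tripleMap F n x) ⟨3 * i, by omega⟩ v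

theorem tripleMap_update_hammingDist_div_three {c x : Fin n → F} (hcx : c ≠ x) (i : Fin n)
    (v : F) :
    (hammingDist (tripleMap F n c) (update (tripleMap F n x) ⟨3 * i, by omega⟩ v) + 1) / 3 =
      hammingDist c x := by
  have h := hammingDist_tripleMap_update c x i v
  have := hammingDist_pos.mpr hcx
  split_ifs at h <;> omega

theorem update_tripleMap_notMem_map {C : Submodule F (Fin n → F)} {x : Fin n → F} (hx : x ∉ C)
    (i : Fin n) (v : F) :
    update (tripleMap F n x) ⟨3 * i, by omega⟩ v ∉ C.map (tripleMap F n) := by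
  rintro ⟨c, hc, hcx'⟩
  have h := tripleMap_update_hammingDist_div_three (ne_of_mem_of_not_mem hc hx) i v
  rw [hcx', hammingDist_self] at h
  exact (hammingDist_pos.mpr (ne_of_mem_of_not_mem hc hx)).ne' h.symm

end Tripling

theorem Submodule.exists_ne_hammingDist_eq {F : Type*} [Field F] [Fintype F] [DecidableEq F]
    {n : ℕ} (C : Submodule F (Fin n → F)) (x : Fin n → F)
    (hlt : {d : ℕ | ∃ c ∈ C, hammingDist c x = d}.ncard < Fintype.card F ^ Module.finrank F C) :
    ∃ c₁ ∈ C, ∃ c₂ ∈ C, hammingDist c₁ x = hammingDist c₂ x ∧ c₁ ≠ c₂ := by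
  have hcard : (C : Set (Fin n → F)).ncard = Fintype.card F ^ Module.finrank F C := by
    rw [← Nat.card_coe_set_eq, SetLike.coe_sort_coe, Module.natCard_eq_pow_finrank (K := F),
      Nat.card_eq_fintype_card]
  by_contra! hinj
  exact hlt.ne (hcard ▸ Set.InjOn.ncard_image (f := (hammingDist · x)) hinj)

theorem tripling_increases_distinct_distances_general {F : Type*} [Field F] [Fintype F] [DecidableEq F]
    {n k : ℕ}
    (C : Submodule F (Fin n → F)) (hk : Module.finrank F C = k)
    (x : Fin n → F) (hx : x ∉ C)
    (hlt : {d : ℕ | ∃ c ∈ C, hammingDist c x = d}.ncard < Fintype.card F ^ k) :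
    ∃ x' : Fin (3 * n) → F, x' ∉ C.map (tripleMap F n) ∧
      {d : ℕ | ∃ c ∈ C, hammingDist c x = d}.ncard <
        {d : ℕ | ∃ c ∈ C.map (tripleMap F n), hammingDist c x' = d}.ncard := by
  obtain ⟨c₁, hc₁, c₂, hc₂, hdist, hne⟩ := C.exists_ne_hammingDist_eq x (hk ▸ hlt)
  obtain ⟨i, hi⟩ := Function.ne_iff.mp hne
  wlog hc₁i : c₁ i ≠ x i generalizing c₁ c₂
  · exact this c₂ hc₂ c₁ hc₁ hdist.symm hne.symm hi.symm (not_not.mp hc₁i ▸ hi.symm)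
  set x' := update (tripleMap F n x) ⟨3 * i, by omega⟩ (c₁ i)
  set g : (Fin n → F) → ℕ := fun c => hammingDist (tripleMap F n c) x'
  have hφ : ∀ c ∈ C, (g c + 1) / 3 = hammingDist c x := fun c hc =>
    tripleMap_update_hammingDist_div_three (ne_of_mem_of_not_mem hc hx) i (c₁ i)
  have hg : g c₁ ≠ g c₂ := by
    have h₁ : g c₁ + _ = _ := hammingDist_tripleMap_update c₁ x i (c₁ i)
    have h₂ : g c₂ + _ = _ := hammingDist_tripleMap_update c₂ x i (c₁ i)
    rw [if_neg hc₁i, if_pos rfl] at h₁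
    rw [if_neg hi.symm] at h₂
    split_ifs at h₂ <;> omega
  have hD : {d | ∃ c ∈ C, hammingDist c x = d} = (fun m => (m + 1) / 3) '' (g '' C) := by
    rw [Set.image_image]
    exact (Set.image_congr hφ).symm
  have hD' : {d | ∃ c ∈ C.map (tripleMap F n), hammingDist c x' = d} = g '' C := by
    change (hammingDist · x') '' ↑(C.map (tripleMap F n)) = _
    rw [Submodule.map_coe, Set.image_image]
  refine ⟨x', update_tripleMap_notMem_map hx i (c₁ i), ?_⟩
  rw [hD, hD']
  refine Set.ncard_image_lt_of_not_injOn ((Set.toFinite _).image g) fun hinj => hg ?_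
  exact hinj ⟨c₁, hc₁, rfl⟩ ⟨c₂, hc₂, rfl⟩ (by simp only [hφ c₁ hc₁, hφ c₂ hc₂, hdist])

theorem tripling_increases_distinct_distances {F : Type*} [Field F] [Fintype F] [DecidableEq F]
    {n k : ℕ} (hq : 3 ≤ Fintype.card F)
    (C : Submodule F (Fin n → F)) (hk : Module.finrank F C = k)
    (x : Fin n → F) (hx : x ∉ C)
    (hlt : {d : ℕ | ∃ c ∈ C, hammingDist c x = d}.ncard < Fintype.card F ^ k) :
    ∃ x' : Fin (3 * n) → F, x' ∉ C.map (tripleMap F n) ∧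
      {d : ℕ | ∃ c ∈ C, hammingDist c x = d}.ncard <
        {d : ℕ | ∃ c ∈ C.map (tripleMap F n), hammingDist c x' = d}.ncard :=
  tripling_increases_distinct_distances_general C hk x hx hlt
end

section
/- For every prime power q and every positive integer k, there exists a linear code of dimension k over GF(q) whose set of distinct Hamming weights (including zero) has exactly (q^k - 1)/(q - 1) + 1 elements. -/
namespace MWSaux

open Finset

set_option linter.unusedSectionVars false

variable {F : Type*} [Field F] [Fintype F] [DecidableEq F] {k : ℕ}

/-- dot product -/
def d (x v : Fin k → F) : F := ∑ i, x i * v i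

lemma d_add (x y v : Fin k → F) : d (x + y) v = d x v + d y v := by
  simp [d, add_mul, Finset.sum_add_distrib]

lemma d_smul (c : F) (x v : Fin k → F) : d (c • x) v = c * d x v := by
  simp [d, Finset.mul_sum, mul_assoc]

lemma d_zero (v : Fin k → F) : d (0 : Fin k → F) v = 0 := by simp [d]

lemma d_subv (x v w : Fin k → F) : d x (v - w) = d x v - d x w := by
  simp [d, mul_sub, Finset.sum_sub_distrib]

lemma d_smulv (c : F) (x v : Fin k → F) : d x (c • v) = c * d x v := by
  simp [d, Finset.mul_sum, mul_comm, mul_left_comm]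

lemma d_single (x : Fin k → F) (j : Fin k) : d x (Pi.single j 1) = x j := by
  simp [d, Pi.single_apply]

lemma prop_of_support_eq {x y : Fin k → F} (hx : x ≠ 0)
    (h : ∀ v, d x v = 0 ↔ d y v = 0) : ∃ c : F, c ≠ 0 ∧ y = c • x := by
  obtain ⟨j, hj⟩ : ∃ j, x j ≠ 0 := by
    by_contra hc; push_neg at hc; exact hx (funext fun j => hc j)
  set v0 : Fin k → F := Pi.single j 1 with hv0
  have hx0 : d x v0 ≠ 0 := by rw [hv0, d_single]; exact hj
  have hy0 : d y v0 ≠ 0 := fun h0 => hx0 ((h v0).mpr h0)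
  refine ⟨d y v0 / d x v0, div_ne_zero hy0 hx0, ?_⟩
  have key : ∀ v, d x v0 * d y v = d y v0 * d x v := by
    intro v
    have hw : d x (d x v0 • v - d x v • v0) = 0 := by
      rw [d_subv, d_smulv, d_smulv]; ring
    have hw' := (h _).mp hw
    rw [d_subv, d_smulv, d_smulv] at hw'
    linear_combination hw'
  have hdx : d x v0 = x j := by rw [hv0, d_single]
  funext i
  have hkey := key (Pi.single i 1)
  simp only [d_single, hdx] at hkey
  rw [Pi.smul_apply, smul_eq_mul, hdx]
  field_simp
  linear_combination hkey

section Construction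

variable (F) (k)

noncomputable def enum (v : Fin k → F) : ℕ := (Fintype.equivFin (Fin k → F) v : ℕ)

lemma enum_inj : Function.Injective (enum F k) := fun v w h =>
  (Fintype.equivFin (Fin k → F)).injective (Fin.val_injective h)

def Mb : ℕ := 2 ^ Fintype.card (Fin k → F)

lemma pow_enum_lt (v : Fin k → F) : 2 ^ enum F k v < Mb F k :=
  Nat.pow_lt_pow_right one_lt_two (Fintype.equivFin (Fin k → F) v).isLt

/-- support of the functional `d x ·` -/
def S (x : Fin k → F) : Finset (Fin k → F) := univ.filter fun v => d x v ≠ 0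

/-- weight -/
noncomputable def W (x : Fin k → F) : ℕ := ∑ v ∈ S F k x, 2 ^ enum F k v

noncomputable def L : (Fin k → F) →ₗ[F] (((Fin k → F) × Fin (Mb F k)) → F) where
  toFun x := fun p => if (p.2 : ℕ) < 2 ^ enum F k p.1 then d x p.1 else 0
  map_add' x y := by
    funext p; simp only [Pi.add_apply]; split_ifs
    · exact d_add x y p.1
    · simp
  map_smul' c x := by
    funext p; simp only [Pi.smul_apply, RingHom.id_apply, smul_eq_mul]; split_ifs
    · exact d_smul c x p.1
    · simp

lemma L_inj : Function.Injective (L F k) := by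
  intro x y hxy
  have hM : 0 < Mb F k := by unfold Mb; positivity
  have hd : ∀ v, d x v = d y v := by
    intro v
    have h0 : ((⟨0, hM⟩ : Fin (Mb F k)) : ℕ) < 2 ^ enum F k v := by positivity
    have h := congrFun hxy (v, ⟨0, hM⟩)
    simpa [L, h0] using h
  funext j
  have h := hd (Pi.single j 1)
  rwa [d_single, d_single] at h

lemma card_filter_L (x : Fin k → F) :
    (univ.filter fun p : (Fin k → F) × Fin (Mb F k) => L F k x p ≠ 0).card = W F k x := by
  rw [Finset.card_filter, Fintype.sum_prod_type]
  have key : ∀ v : Fin k → F, (∑ j : Fin (Mb F k),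
      if L F k x (v, j) ≠ 0 then 1 else 0) = if d x v ≠ 0 then 2 ^ enum F k v else 0 := by
    intro v
    by_cases hv : d x v = 0
    · simp [L, hv]
    · rw [if_pos hv]
      have h1 : ∀ j : Fin (Mb F k), (if L F k x (v, j) ≠ 0 then (1:ℕ) else 0)
          = if (j : ℕ) < 2 ^ enum F k v then 1 else 0 := by
        intro j; simp [L, hv]
      rw [Finset.sum_congr rfl fun j _ => h1 j, ← Finset.card_filter]
      have h2 : (univ.filter fun j : Fin (Mb F k) => (j : ℕ) < 2 ^ enum F k v)
          = Finset.Iio ⟨2 ^ enum F k v, pow_enum_lt F k v⟩ := by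
        ext j; simp [Fin.lt_def]
      rw [h2, Fin.card_Iio]
  rw [Finset.sum_congr rfl fun v _ => key v]
  simp only [W, S, Finset.sum_filter]

variable {F k}

lemma S_pos {x : Fin k → F} (hx : x ≠ 0) : 0 < W F k x := by
  obtain ⟨j, hj⟩ : ∃ j, x j ≠ 0 := by
    by_contra hc; push_neg at hc; exact hx (funext fun j => hc j)
  have hmem : Pi.single j 1 ∈ S F k x := by
    simp only [S, mem_filter, mem_univ, true_and, d_single]; exact hj
  exact lt_of_lt_of_le (by positivity) (Finset.single_le_sum (f := fun v => 2 ^ enum F k v)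
    (fun v _ => Nat.zero_le _) hmem)

lemma W_zero : W F k 0 = 0 := by
  simp [W, S, d_zero]

lemma S_smul {x : Fin k → F} {c : F} (hc : c ≠ 0) : S F k (c • x) = S F k x := by
  ext v; simp [S, d_smul, hc]

lemma W_inj_on_S {s t : Finset (Fin k → F)}
    (h : (∑ v ∈ s, 2 ^ enum F k v) = ∑ v ∈ t, 2 ^ enum F k v) : s = t := by
  have hs : (∑ v ∈ s, 2 ^ enum F k v) = ∑ i ∈ s.image (enum F k), 2 ^ i :=
    (Finset.sum_image fun a _ b _ hab => enum_inj F k hab).symm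
  have ht : (∑ v ∈ t, 2 ^ enum F k v) = ∑ i ∈ t.image (enum F k), 2 ^ i :=
    (Finset.sum_image fun a _ b _ hab => enum_inj F k hab).symm
  rw [hs, ht] at h
  have himg := Finset.geomSum_injective le_rfl h
  exact Finset.image_injective (enum_inj F k) himg

lemma fiber_card {x0 : Fin k → F} (hx0 : x0 ≠ 0) :
    (((univ : Finset (Fin k → F)).filter (· ≠ 0)).filter fun y => S F k y = S F k x0).card
      = Fintype.card F - 1 := by
  obtain ⟨j, hj⟩ : ∃ j, x0 j ≠ 0 := by
    by_contra hc; push_neg at hc; exact hx0 (funext fun j => hc j)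
  have hcard : ((univ : Finset F).filter (· ≠ 0)).card = Fintype.card F - 1 := by
    rw [Finset.filter_ne', Finset.card_erase_of_mem (mem_univ _), Finset.card_univ]
  rw [← hcard]
  symm
  refine Finset.card_bij (fun c _ => c • x0) ?_ ?_ ?_
  · intro c hc
    rw [mem_filter] at hc
    simp only [mem_filter, mem_univ, true_and]
    exact ⟨smul_ne_zero hc.2 hx0, S_smul hc.2⟩
  · intro c hc c' hc' hcc
    have := congrFun hcc j
    simp only [Pi.smul_apply, smul_eq_mul] at this
    exact mul_right_cancel₀ hj this
  · intro y hy
    rw [mem_filter, mem_filter] at hy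
    obtain ⟨⟨_, hy0⟩, hSy⟩ := hy
    have hiff : ∀ v, d x0 v = 0 ↔ d y v = 0 := by
      intro v
      have := Finset.ext_iff.mp hSy v
      simp only [S, mem_filter, mem_univ, true_and] at this
      tauto
    obtain ⟨c, hc, hyc⟩ := prop_of_support_eq hx0 hiff
    exact ⟨c, by simp [mem_filter, hc], hyc.symm⟩

lemma image_S_card :
    ((((univ : Finset (Fin k → F)).filter (· ≠ 0)).image (S F k)).card) * (Fintype.card F - 1)
      = Fintype.card F ^ k - 1 := by
  set T := (univ : Finset (Fin k → F)).filter (· ≠ 0) with hT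
  have hTcard : T.card = Fintype.card F ^ k - 1 := by
    rw [hT, Finset.filter_ne', Finset.card_erase_of_mem (mem_univ _), Finset.card_univ]
    congr 1
    simp [Fintype.card_fun]
  have hfib : ∀ b ∈ T.image (S F k),
      (T.filter fun x => S F k x = b).card = Fintype.card F - 1 := by
    intro b hb
    obtain ⟨x0, hx0T, rfl⟩ := Finset.mem_image.mp hb
    exact fiber_card (mem_filter.mp hx0T).2
  have hsum : T.card = (T.image (S F k)).card * (Fintype.card F - 1) := by
    rw [Finset.card_eq_sum_card_image (S F k) T, Finset.sum_congr rfl hfib,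
      Finset.sum_const, smul_eq_mul]
  rw [← hsum, hTcard]

end Construction

end MWSaux

theorem MWS_codes_exist {F : Type*} [Field F] [Fintype F] [DecidableEq F]
    (k : ℕ) (hk : 1 ≤ k) :
    ∃ (n : ℕ) (C : Submodule F (Fin n → F)), Module.finrank F C = k ∧
      {w : ℕ | ∃ c ∈ C, hammingNorm c = w}.ncard =
        (Fintype.card F ^ k - 1) / (Fintype.card F - 1) + 1 := by
  classical
  open MWSaux Finset in
  have hq2 : 2 ≤ Fintype.card F := Fintype.one_lt_card
  set P := (Fin k → F) × Fin (MWSaux.Mb F k) with hP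
  set ee := Fintype.equivFin P with hee
  set nn := Fintype.card P with hnn
  set E : (P → F) ≃ₗ[F] (Fin nn → F) := LinearEquiv.funCongrLeft F F ee.symm with hE
  set L' := E.toLinearMap ∘ₗ MWSaux.L F k with hL'
  have hinj : Function.Injective L' := by
    intro a b h
    apply MWSaux.L_inj F k
    apply E.injective
    simpa [hL'] using h
  refine ⟨nn, LinearMap.range L', ?_, ?_⟩
  · rw [LinearMap.finrank_range_of_inj hinj]
    exact Module.finrank_fin_fun F
  · have hnorm : ∀ x : Fin k → F, hammingNorm (L' x) = MWSaux.W F k x := by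
      intro x
      have happ : ∀ i : Fin nn, L' x i = MWSaux.L F k x (ee.symm i) := by
        intro i
        rfl
      rw [← MWSaux.card_filter_L F k x]
      unfold hammingNorm
      refine Finset.card_bij (fun i _ => ee.symm i) ?_ ?_ ?_
      · intro i hi
        rw [mem_filter] at hi ⊢
        exact ⟨mem_univ _, by rw [← happ i]; exact hi.2⟩
      · intro i _ i' _ h
        exact ee.symm.injective h
      · intro p hp
        refine ⟨ee p, ?_, by simp⟩
        rw [mem_filter] at hp ⊢
        refine ⟨mem_univ _, ?_⟩
        rw [happ (ee p)]
        simpa using hp.2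
    have hset : {w : ℕ | ∃ c ∈ LinearMap.range L', hammingNorm c = w}
        = ↑((univ : Finset (Fin k → F)).image (MWSaux.W F k)) := by
      ext w
      simp only [Set.mem_setOf_eq, LinearMap.mem_range, Finset.coe_image, Finset.coe_univ,
        Set.image_univ, Set.mem_range]
      constructor
      · rintro ⟨c, ⟨x, rfl⟩, hc⟩
        exact ⟨x, by rw [← hnorm x]; exact hc⟩
      · rintro ⟨x, rfl⟩
        exact ⟨L' x, ⟨x, rfl⟩, hnorm x⟩
    rw [hset, Set.ncard_coe_finset]
    set T := (univ : Finset (Fin k → F)).filter (· ≠ 0) with hT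
    have huniv : (univ : Finset (Fin k → F)) = insert 0 T := by
      rw [hT, Finset.filter_ne', Finset.insert_erase (mem_univ _)]
    have himg : (univ : Finset (Fin k → F)).image (MWSaux.W F k)
        = insert 0 (T.image (MWSaux.W F k)) := by
      rw [huniv, Finset.image_insert, MWSaux.W_zero]
    have h0notmem : (0 : ℕ) ∉ T.image (MWSaux.W F k) := by
      rw [Finset.mem_image]
      rintro ⟨y, hy, hy0⟩
      have := MWSaux.S_pos (mem_filter.mp hy).2
      omega
    rw [himg, Finset.card_insert_of_notMem h0notmem]
    have hWimg : T.image (MWSaux.W F k)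
        = (T.image (MWSaux.S F k)).image (fun s => ∑ v ∈ s, 2 ^ MWSaux.enum F k v) := by
      rw [Finset.image_image]
      rfl
    have hcardW : (T.image (MWSaux.W F k)).card = (T.image (MWSaux.S F k)).card := by
      rw [hWimg]
      exact Finset.card_image_of_injective _ (fun s t h => MWSaux.W_inj_on_S h)
    have hcount := MWSaux.image_S_card (F := F) (k := k)
    rw [hcardW]
    have hdiv : (Fintype.card F ^ k - 1) / (Fintype.card F - 1)
        = (T.image (MWSaux.S F k)).card :=
      Nat.div_eq_of_eq_mul_left (by omega) hcount.symm
    omega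
end

section
/- If there exists a linear code of dimension k over GF(q) with exactly s distinct nonzero weights, then there exists a linear code of dimension k+1 over GF(q) with exactly s+1 distinct nonzero weights. -/
open Module Function

section aux

variable {F : Type*} [Field F] [Fintype F] [DecidableEq F]

private lemma hammingNorm_card {ι : Type*} [Fintype ι] (g : ι → F) :
    hammingNorm g = Nat.card {i // g i ≠ 0} := by
  rw [hammingNorm, Nat.card_eq_fintype_card, Fintype.card_subtype]

private lemma hammingNorm_reindex {ι κ : Type*} [Fintype ι] [Fintype κ] (e : ι ≃ κ)
    (g : κ → F) : hammingNorm (fun i => g (e i)) = hammingNorm g := by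
  rw [hammingNorm_card, hammingNorm_card]
  exact Nat.card_congr (e.subtypeEquiv fun i => Iff.rfl)

private lemma hammingNorm_elim {ι κ : Type*} [Fintype ι] [Fintype κ] (g₁ : ι → F) (g₂ : κ → F) :
    hammingNorm (Sum.elim g₁ g₂) = hammingNorm g₁ + hammingNorm g₂ := by
  rw [hammingNorm_card, hammingNorm_card, hammingNorm_card, ← Nat.card_sum]
  exact Nat.card_congr Equiv.subtypeSum

private lemma dual_count {M : Type*} [AddCommGroup M] [Module F M] [Finite M]
    {x : M} (hx : x ≠ 0) :
    Nat.card {φ : Module.Dual F M // φ x ≠ 0} =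
      Fintype.card F ^ finrank F (Module.Dual F M)
        - Fintype.card F ^ (finrank F (Module.Dual F M) - 1) := by
  classical
  haveI : Finite (Module.Dual F M) := DFunLike.finite _
  haveI : Fintype (Module.Dual F M) := Fintype.ofFinite _
  set L : Module.Dual F M →ₗ[F] F := Module.Dual.eval F M x with hL
  have hLx : ∀ φ : Module.Dual F M, L φ = φ x := fun _ => rfl
  have hsurj : Function.Surjective L := by
    intro t
    have hex : ∃ φ : Module.Dual F M, φ x ≠ 0 := by
      by_contra hc
      push_neg at hc
      exact hx ((Module.forall_dual_apply_eq_zero_iff F x).mp hc)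
    obtain ⟨φ, hφ⟩ := hex
    refine ⟨(t * (φ x)⁻¹) • φ, ?_⟩
    rw [hLx]
    simp [LinearMap.smul_apply, smul_eq_mul, mul_assoc, inv_mul_cancel₀ hφ]
  have hrange : LinearMap.range L = ⊤ := LinearMap.range_eq_top.mpr hsurj
  have hrk : finrank F (LinearMap.range L) + finrank F (LinearMap.ker L) = finrank F (Module.Dual F M) :=
    LinearMap.finrank_range_add_finrank_ker L
  have hr1 : finrank F (LinearMap.range L) = 1 := by
    rw [hrange, finrank_top, finrank_self]
  have hker : finrank F (LinearMap.ker L) = finrank F (Module.Dual F M) - 1 := by omega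
  have hcardD : Fintype.card (Module.Dual F M) = Fintype.card F ^ finrank F (Module.Dual F M) := card_eq_pow_finrank
  have hcardker : Nat.card {φ : Module.Dual F M // φ x = 0} = Fintype.card F ^ (finrank F (Module.Dual F M) - 1) := by
    have e : {φ : Module.Dual F M // φ x = 0} ≃ LinearMap.ker L :=
      Equiv.subtypeEquivRight fun φ => by rw [LinearMap.mem_ker, hLx]
    rw [Nat.card_congr e, Nat.card_eq_fintype_card, card_eq_pow_finrank (K := F), hker]
  have hsplit : Nat.card {φ : Module.Dual F M // φ x = 0} + Nat.card {φ : Module.Dual F M // φ x ≠ 0} = Fintype.card (Module.Dual F M) := by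
    rw [← Nat.card_eq_fintype_card, ← Nat.card_sum]
    exact Nat.card_congr (Equiv.sumCompl _)
  have hle : Fintype.card F ^ (finrank F (Module.Dual F M) - 1) ≤ Fintype.card F ^ finrank F (Module.Dual F M) :=
    Nat.pow_le_pow_right Fintype.card_pos (by omega)
  omega

end aux

theorem add_one_weight {F : Type*} [Field F] [Fintype F] [DecidableEq F] (k s : ℕ)
    (h : ∃ (n : ℕ) (C : Submodule F (Fin n → F)), Module.finrank F C = k ∧
      {w : ℕ | ∃ c ∈ C, c ≠ 0 ∧ hammingNorm c = w}.ncard = s) :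
    ∃ (n' : ℕ) (C' : Submodule F (Fin n' → F)), Module.finrank F C' = k + 1 ∧
      {w : ℕ | ∃ c ∈ C', c ≠ 0 ∧ hammingNorm c = w}.ncard = s + 1 := by
  classical
  obtain ⟨n, C, hk, hs⟩ := h
  set S : Set ℕ := {w : ℕ | ∃ c ∈ C, c ≠ 0 ∧ hammingNorm c = w} with hS
  haveI : Finite (↥C × F) := inferInstance
  haveI : Finite (Module.Dual F (↥C × F)) := DFunLike.finite _
  haveI : Fintype (Module.Dual F (↥C × F)) := Fintype.ofFinite _
  set d := Fintype.card (Module.Dual F (↥C × F)) with hd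
  set r := finrank F (Module.Dual F (↥C × F)) with hr
  set W := Fintype.card F ^ r - Fintype.card F ^ (r - 1) with hW
  obtain ⟨e⟩ : Nonempty (Fin (n + d) ≃ (Fin n ⊕ Module.Dual F (↥C × F))) := by
    refine ⟨Fintype.equivOfCardEq ?_⟩
    simp [Fintype.card_sum, hd]
  let T₀ : (↥C × F) →ₗ[F] ((Fin n ⊕ Module.Dual F (↥C × F)) → F) :=
    { toFun := fun x => Sum.elim (x.1 : Fin n → F) (fun φ => φ x)
      map_add' := by
        intro x y; funext i
        cases i <;> simp
      map_smul' := by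
        intro c x; funext i
        cases i <;> simp }
  let T : (↥C × F) →ₗ[F] (Fin (n + d) → F) :=
    (LinearEquiv.funCongrLeft F F e).toLinearMap ∘ₗ T₀
  have hT0inj : Function.Injective T₀ := by
    intro x y hxy
    have h1 : (x.1 : Fin n → F) = (y.1 : Fin n → F) := by
      funext i; exact congrFun hxy (Sum.inl i)
    have h2 : x.2 = y.2 := congrFun hxy (Sum.inr (LinearMap.snd F (↥C) F))
    exact Prod.ext (Subtype.ext h1) h2
  have hTinj : Function.Injective T :=
    (LinearEquiv.funCongrLeft F F e).injective.comp hT0inj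
  refine ⟨n + d, LinearMap.range T, ?_, ?_⟩
  · rw [LinearMap.finrank_range_of_inj hTinj, Module.finrank_prod, hk, finrank_self]
  · have hnorm : ∀ x : ↥C × F, x ≠ 0 →
        hammingNorm (T x) = hammingNorm (x.1 : Fin n → F) + W := by
      intro x hx
      have h1 : T x = fun i => (T₀ x) (e i) := rfl
      rw [h1, hammingNorm_reindex e (T₀ x)]
      have h2 : (T₀ x : (Fin n ⊕ Module.Dual F (↥C × F)) → F)
          = Sum.elim (x.1 : Fin n → F) (fun φ => φ x) := rfl
      rw [h2, hammingNorm_elim]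
      congr 1
      rw [hammingNorm_card]
      exact dual_count hx
    have hset : {w : ℕ | ∃ c ∈ LinearMap.range T, c ≠ 0 ∧ hammingNorm c = w}
        = (fun w => w + W) '' insert 0 S := by
      ext w
      constructor
      · rintro ⟨c, ⟨x, rfl⟩, hc0, rfl⟩
        have hx : x ≠ 0 := by rintro rfl; simp at hc0
        rw [hnorm x hx]
        by_cases h1 : x.1 = 0
        · exact ⟨0, Set.mem_insert _ _, by rw [h1]; simp⟩
        · refine ⟨hammingNorm (x.1 : Fin n → F), Set.mem_insert_of_mem _ ?_, rfl⟩
          exact ⟨(x.1 : Fin n → F), x.1.2, fun hc => h1 (Subtype.ext hc), rfl⟩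
      · rintro ⟨v, hv, rfl⟩
        rcases Set.mem_insert_iff.mp hv with rfl | hvS
        · refine ⟨T (0, 1), ⟨(0, 1), rfl⟩, ?_, ?_⟩
          · intro hc
            have h01 : ((0, 1) : ↥C × F) = 0 := hTinj (by simpa using hc)
            exact one_ne_zero (congrArg Prod.snd h01)
          · rw [hnorm (0, 1) (by simp)]
            simp
        · obtain ⟨c, hcC, hc0, rfl⟩ := hvS
          refine ⟨T (⟨c, hcC⟩, 0), ⟨(⟨c, hcC⟩, 0), rfl⟩, ?_, ?_⟩
          · intro hc
            have h01 : ((⟨c, hcC⟩, 0) : ↥C × F) = 0 := hTinj (by simpa using hc)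
            exact hc0 (by simpa [Subtype.ext_iff] using congrArg Prod.fst h01)
          · rw [hnorm (⟨c, hcC⟩, 0) (by simp [Prod.ext_iff, Subtype.ext_iff, hc0])]
    rw [hset, Set.ncard_image_of_injective _ (add_left_injective W)]
    have hSfin : S.Finite := by
      apply Set.Finite.subset (Set.finite_Iic n)
      rintro w ⟨c, _, _, rfl⟩
      simpa using (hammingNorm_le_card_fintype (x := c))
    have h0S : 0 ∉ S := by
      rintro ⟨c, _, hc0, hc⟩
      exact hc0 (hammingNorm_eq_zero.mp hc)
    rw [Set.ncard_insert_of_notMem h0S hSfin, hs]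
end

section
/- Let C be a linear code of dimension k over GF(q) with s distinct nonzero weights, and let D be a simplex code of dimension k+1 over GF(q). Then the code generated by the block matrix [[0, g_0],[G, G']] — where G generates C, the zero row is prepended, and the right block is a generator of D — has the property that every nonzero codeword (c'|c'') satisfies: c'' is a nonzero codeword of D of weight q^k, and hence the weight of (c'|c'') equals weight(c') + q^k. -/
lemma hammingNorm_fin_append {F : Type*} [DecidableEq F] [Zero F] {n N : ℕ}
    (a : Fin n → F) (b : Fin N → F) :
    hammingNorm (Fin.append a b) = hammingNorm a + hammingNorm b := by
  classical
  simp only [hammingNorm, Finset.card_filter]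
  rw [Fin.sum_univ_add]
  simp [Fin.append_left, Fin.append_right]

lemma sum_smul_append {F : Type*} [Semiring F] {m n N : ℕ}
    (a : Fin m → F) (u : Fin m → Fin n → F) (v : Fin m → Fin N → F) :
    ∑ i, a i • Fin.append (u i) (v i)
      = Fin.append (∑ i, a i • u i) (∑ i, a i • v i) := by
  funext j
  refine Fin.addCases (fun j => ?_) (fun j => ?_) j <;>
    simp [Fin.append_left, Fin.append_right, Finset.sum_apply]

theorem block_construction_weights {F : Type*} [Field F] [Fintype F] [DecidableEq F]
    {n N k s : ℕ}
    (C : Submodule F (Fin n → F)) (hk : Module.finrank F C = k)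
    (hs : {w : ℕ | ∃ c ∈ C, c ≠ 0 ∧ hammingNorm c = w}.ncard = s)
    (G : Fin k → Fin n → F) (hG : Submodule.span F (Set.range G) = C)
    (D : Submodule F (Fin N → F))
    (G' : Fin (k + 1) → Fin N → F) (hG' : Submodule.span F (Set.range G') = D)
    (hind : LinearIndependent F G')
    (hD : ∀ d ∈ D, d ≠ 0 → hammingNorm d = Fintype.card F ^ k) :
    ∀ z ∈ Submodule.span F
        (Set.range fun i : Fin (k + 1) => Fin.append ((Fin.cons 0 G : Fin (k + 1) → Fin n → F) i) (G' i)),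
      z ≠ 0 →
      ∃ (c' : Fin n → F) (c'' : Fin N → F), z = Fin.append c' c'' ∧ c' ∈ C ∧
        c'' ∈ D ∧ c'' ≠ 0 ∧ hammingNorm c'' = Fintype.card F ^ k ∧
        hammingNorm z = hammingNorm c' + Fintype.card F ^ k := by
  intro z hz hz0
  rw [Submodule.mem_span_range_iff_exists_fun] at hz
  obtain ⟨a, ha⟩ := hz
  rw [sum_smul_append] at ha
  set c' : Fin n → F := ∑ i, a i • (Fin.cons 0 G : Fin (k + 1) → Fin n → F) i with hc'
  set c'' : Fin N → F := ∑ i, a i • G' i with hc''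
  have hc'C : c' ∈ C := by
    rw [← hG]
    exact Submodule.sum_mem _ fun i _ => Submodule.smul_mem _ _ <| by
      refine Fin.cases ?_ (fun i => ?_) i
      · simp
      · exact Submodule.subset_span ⟨i, rfl⟩
  have hc''D : c'' ∈ D := by
    rw [← hG']
    exact Submodule.sum_mem _ fun i _ => Submodule.smul_mem _ _
      (Submodule.subset_span ⟨i, rfl⟩)
  have hc''0 : c'' ≠ 0 := by
    intro h
    apply hz0
    have ha0 : ∀ i, a i = 0 := by
      have := linearIndependent_iff'.mp hind Finset.univ a (by rw [← hc'']; exact h)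
      intro i; exact this i (Finset.mem_univ i)
    rw [← ha]
    have : c' = 0 := by rw [hc']; simp [ha0]
    rw [this, h]
    funext j
    exact Fin.addCases (fun j => by simp) (fun j => by simp) j
  have hw := hD c'' hc''D hc''0
  exact ⟨c', c'', ha.symm, hc'C, hc''D, hc''0, hw,
    by rw [← ha, hammingNorm_fin_append, hw]⟩
end

section
/- If there exists a linear code of dimension k over GF(q) with exactly s distinct nonzero weights, then there exists a linear code of dimension k+1 over GF(q) with exactly q^k + s distinct nonzero weights. -/
/-!
Repeat the coordinates of the code `C ⊆ F^n` so that, listing its `q^k` codewords as `c_i`, the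
`i`-th block holds `(n+1)^i` copies of them, and let `x` carry `c_i` on the `i`-th block. The
distance from the repeated image of `c` to `x` is `∑ i, (n+1)^i d(c, c_i)`, a base-`(n+1)`
expansion whose zero digit `d(c, c)` identifies `c`; so the repeated code `D` has pairwise distinct
distances to `x`. Now adjoin the row `(-x | 1 … 1)` with `m` ones, `m` larger than the length of
`D`. A codeword with nonzero coefficient `a` on that row has weight `d(a⁻¹ c, x) + m`; these are
`q^k` new weights above all weights of `D`, and the codewords with `a = 0` have the weights of `D`,
which are those of `C` times a constant.
-/

open Function

section HammingNorm

variable {ι κ σ β : Type*} [Fintype ι] [Fintype κ] [Zero β] [DecidableEq β]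

theorem hammingNorm_eq_sum_ite (v : ι → β) :
    hammingNorm v = ∑ i, if v i = 0 then 0 else 1 := by
  simp [hammingNorm, Finset.card_filter]

theorem hammingNorm_comp_equiv (e : κ ≃ ι) (v : ι → β) :
    hammingNorm (v ∘ e) = hammingNorm v := by
  simp only [hammingNorm_eq_sum_ite, comp_apply]
  exact e.sum_comp fun i => if v i = 0 then 0 else 1

theorem hammingNorm_sumElim (u : ι → β) (w : κ → β) :
    hammingNorm (Sum.elim u w) = hammingNorm u + hammingNorm w := by
  simp only [hammingNorm_eq_sum_ite]
  rw [Fintype.sum_sum_type]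
  rfl

theorem hammingNorm_const (b : β) :
    hammingNorm (fun _ : κ => b) = if b = 0 then 0 else Fintype.card κ := by
  split_ifs with hb <;> simp [hammingNorm_eq_sum_ite, hb]

theorem hammingNorm_sigma {α : σ → Type*} [Fintype σ] [∀ j, Fintype (α j)]
    (v : (Σ j, α j) → β) :
    hammingNorm v = ∑ j, hammingNorm fun a => v ⟨j, a⟩ := by
  simp only [hammingNorm_eq_sum_ite]
  exact Fintype.sum_sigma _

theorem hammingNorm_comp_snd (u : ι → β) :
    hammingNorm (fun p : κ × ι => u p.2) = Fintype.card κ * hammingNorm u := by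
  simp only [hammingNorm_eq_sum_ite]
  rw [Fintype.sum_prod_type]
  exact (Finset.sum_const (∑ i, if u i = 0 then 0 else 1)).trans (smul_eq_mul _ _)

theorem hammingNorm_sub_eq_hammingDist {γ : Type*} [AddGroup γ] [DecidableEq γ]
    (u v : ι → γ) :
    hammingNorm (u - v) = hammingDist u v := by
  simp [hammingNorm, hammingDist, sub_eq_zero]

def blockRepeat (r : σ → ℕ) (w : σ → ι → β) : (Σ j, Fin (r j) × ι) → β :=
  fun q => w q.1 q.2.2

theorem hammingNorm_blockRepeat [Fintype σ] (r : σ → ℕ) (w : σ → ι → β) :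
    hammingNorm (blockRepeat r w) = ∑ j, r j * hammingNorm (w j) := by
  simp only [hammingNorm_sigma, blockRepeat, hammingNorm_comp_snd, Fintype.card_fin]

end HammingNorm

theorem eq_of_sum_pow_mul_eq {N B : ℕ} {f g : Fin N → ℕ} (hf : ∀ i, f i < B)
    (hg : ∀ i, g i < B)
    (h : ∑ i : Fin N, B ^ (i : ℕ) * f i = ∑ i : Fin N, B ^ (i : ℕ) * g i) : f = g := by
  have hdigits : (fun i => (⟨f i, hf i⟩ : Fin B)) = fun i => ⟨g i, hg i⟩ :=
    finFunctionFinEquiv.injective (Fin.ext (by simpa [finFunctionFinEquiv_apply, mul_comm] using h))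
  funext i
  exact congrArg Fin.val (congrFun hdigits i)

theorem injOn_sum_pow_mul_hammingDist {ι β : Type*} [Fintype ι] [DecidableEq β] {N B : ℕ}
    (u : Fin N → ι → β) (hB : Fintype.card ι < B) :
    Set.InjOn (fun v => ∑ i : Fin N, B ^ (i : ℕ) * hammingDist v (u i)) (Set.range u) := by
  rintro _ ⟨a, rfl⟩ _ ⟨b, rfl⟩ h
  have hlt (v : ι → β) (i : Fin N) : hammingDist v (u i) < B :=
    hammingDist_le_card_fintype.trans_lt hB
  have hdist := congrFun (eq_of_sum_pow_mul_eq (hlt _) (hlt _) h) a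
  rw [hammingDist_self, eq_comm, hammingDist_eq_zero] at hdist
  exact hdist.symm

section AugmentDef

variable {F ι : Type*} [Field F] (D : Submodule F (ι → F)) (x : ι → F) (κ : Type*)

def augment : D × F →ₗ[F] (ι ⊕ κ → F) where
  toFun p := Sum.elim (p.1 - p.2 • x) fun _ => p.2
  map_add' p q := by
    ext (i | i) <;> simp [add_smul, sub_add_sub_comm]
  map_smul' r p := by
    ext (i | i) <;> simp [mul_sub, mul_assoc]

variable {D x κ}

theorem augment_apply (p : D × F) :
    augment D x κ p = Sum.elim ((p.1 : ι → F) - p.2 • x) fun _ => p.2 := rfl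

theorem augment_injective [Nonempty κ] : Injective (augment D x κ) := by
  rw [← LinearMap.ker_eq_bot, LinearMap.ker_eq_bot']
  rintro ⟨c, a⟩ h
  obtain rfl : a = 0 := congrFun h (Sum.inr (Classical.arbitrary κ))
  have hc : (c : ι → F) = 0 := by simpa [augment_apply] using congrArg (· ∘ Sum.inl) h
  simp [Submodule.coe_eq_zero.mp hc]

theorem finrank_range_augment [Finite ι] [Nonempty κ] :
    Module.finrank F (LinearMap.range (augment D x κ)) = Module.finrank F D + 1 := by
  rw [LinearMap.finrank_range_of_inj augment_injective, Module.finrank_prod, Module.finrank_self]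

end AugmentDef

section LinearCode

variable {F ι : Type*} [Field F] [Fintype ι] [DecidableEq F]

def weights (C : Submodule F (ι → F)) : Set ℕ :=
  {w | ∃ c ∈ C, c ≠ 0 ∧ hammingNorm c = w}

theorem weights_subset_Iic (C : Submodule F (ι → F)) :
    weights C ⊆ Set.Iic (Fintype.card ι) := by
  rintro _ ⟨c, -, -, rfl⟩
  exact hammingNorm_le_card_fintype

theorem weights_map {κ : Type*} [Fintype κ] (C : Submodule F (ι → F))
    {f : (ι → F) →ₗ[F] (κ → F)} (hf : Injective f) {g : ℕ → ℕ}
    (hg : ∀ v, hammingNorm (f v) = g (hammingNorm v)) :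
    weights (C.map f) = g '' weights C := by
  ext w
  constructor
  · rintro ⟨_, ⟨c, hc, rfl⟩, hne, rfl⟩
    exact ⟨hammingNorm c, ⟨c, hc, fun h => hne (h ▸ map_zero f), rfl⟩, (hg c).symm⟩
  · rintro ⟨_, ⟨c, hc, hne, rfl⟩, rfl⟩
    exact ⟨f c, ⟨c, hc, rfl⟩, (map_ne_zero_iff f hf).mpr hne, hg c⟩

theorem exists_fin_code (C : Submodule F (ι → F)) :
    ∃ (n : ℕ) (C' : Submodule F (Fin n → F)),
      Module.finrank F C' = Module.finrank F C ∧ weights C' = weights C := by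
  let ℓ := LinearEquiv.funCongrLeft F F (Fintype.equivFin ι).symm
  refine ⟨Fintype.card ι, C.map ℓ.toLinearMap, LinearEquiv.finrank_map_eq ℓ C, ?_⟩
  rw [weights_map C ℓ.injective (g := id) fun v => hammingNorm_comp_equiv _ v, Set.image_id]

section Augment

variable {D : Submodule F (ι → F)} {x : ι → F} {κ : Type*}

theorem hammingNorm_augment [Fintype κ] (c : D) (a : F) :
    hammingNorm (augment D x κ (c, a)) =
      hammingNorm ((c : ι → F) - a • x) + if a = 0 then 0 else Fintype.card κ := by
  rw [augment_apply, hammingNorm_sumElim, hammingNorm_const]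

theorem hammingNorm_augment_of_ne_zero [Fintype κ] (c : D) {a : F} (ha : a ≠ 0) :
    hammingNorm (augment D x κ (c, a)) =
      hammingDist (a⁻¹ • (c : ι → F)) x + Fintype.card κ := by
  rw [hammingNorm_augment, if_neg ha, hammingNorm_sub_eq_hammingDist,
    ← hammingDist_smul (k := a⁻¹) fun _ => IsSMulRegular.of_ne_zero (inv_ne_zero ha),
    inv_smul_smul₀ ha]

theorem weights_range_augment [Fintype κ] [Nonempty κ] :
    weights (LinearMap.range (augment D x κ)) =
      (fun v => hammingDist v x + Fintype.card κ) '' D ∪ weights D := by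
  ext w
  constructor
  · rintro ⟨_, ⟨⟨c, a⟩, rfl⟩, hne, rfl⟩
    rcases eq_or_ne a 0 with rfl | ha
    · have hc : c ≠ 0 := by simpa using (map_ne_zero_iff _ augment_injective).mp hne
      exact Or.inr ⟨c, c.2, by simpa using hc, by simp [hammingNorm_augment]⟩
    · exact Or.inl ⟨_, D.smul_mem a⁻¹ c.2, (hammingNorm_augment_of_ne_zero c ha).symm⟩
  · rintro (⟨v, hv, rfl⟩ | ⟨c, hc, hne, rfl⟩)
    · refine ⟨_, ⟨(⟨v, hv⟩, 1), rfl⟩, ?_, by simp [hammingNorm_augment_of_ne_zero]⟩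
      exact (map_ne_zero_iff _ augment_injective).mpr (by simp)
    · refine ⟨_, ⟨(⟨c, hc⟩, 0), rfl⟩, ?_, by simp [hammingNorm_augment]⟩
      exact (map_ne_zero_iff _ augment_injective).mpr (by simpa using hne)

theorem ncard_weights_range_augment [Fintype F] [Fintype κ]
    (hκ : Fintype.card ι < Fintype.card κ) (hx : Set.InjOn (fun v => hammingDist v x) D) :
    (weights (LinearMap.range (augment D x κ))).ncard = Nat.card D + (weights D).ncard := by
  have : Nonempty κ := Fintype.card_pos_iff.mp (Nat.zero_lt_of_lt hκ)
  have hdisj : Disjoint ((fun v => hammingDist v x + Fintype.card κ) '' D) (weights D) := by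
    rw [Set.disjoint_left]
    rintro _ ⟨v, -, rfl⟩ hw
    have := weights_subset_Iic D hw
    simp only [Set.mem_Iic] at this
    omega
  rw [weights_range_augment, Set.ncard_union_eq hdisj ((Set.toFinite _).image _)
      ((Set.finite_Iic _).subset (weights_subset_Iic D)),
    Set.InjOn.ncard_image fun v hv w hw h => hx hv hw (Nat.add_right_cancel h),
    ← Nat.card_coe_set_eq]
  rfl

end Augment

end LinearCode

section Repetition

variable {F ι : Type*} [Field F] [Fintype ι] (C : Submodule F (ι → F))

def repetitionCounts (i : Fin (Nat.card C)) : ℕ := (Fintype.card ι + 1) ^ (i : ℕ)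

abbrev RepetitionIndex := Σ i, Fin (repetitionCounts C i) × ι

noncomputable def repetition : (ι → F) →ₗ[F] (RepetitionIndex C → F) :=
  LinearMap.funLeft F F fun q => q.2.2

theorem repetition_apply (v : ι → F) :
    repetition C v = blockRepeat (repetitionCounts C) fun _ => v := rfl

theorem hammingNorm_repetition [DecidableEq F] (v : ι → F) :
    hammingNorm (repetition C v) = (∑ i, repetitionCounts C i) * hammingNorm v := by
  rw [repetition_apply, hammingNorm_blockRepeat, Finset.sum_mul]

variable [Fintype F]

noncomputable def codewordEnum (i : Fin (Nat.card C)) : ι → F := (Finite.equivFin C).symm i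

theorem range_codewordEnum : Set.range (codewordEnum C) = C := by
  ext v
  refine ⟨?_, fun hv => ⟨Finite.equivFin C ⟨v, hv⟩, by simp [codewordEnum]⟩⟩
  rintro ⟨i, rfl⟩
  exact ((Finite.equivFin C).symm i).2

noncomputable def separatingVector : RepetitionIndex C → F :=
  blockRepeat (repetitionCounts C) (codewordEnum C)

theorem repetition_injective : Injective (repetition C) := by
  refine LinearMap.funLeft_injective_of_surjective _ _ _ fun j => ?_
  exact ⟨⟨⟨0, Nat.card_pos⟩, ⟨0, pow_pos (Nat.succ_pos _) _⟩, j⟩, rfl⟩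

variable [DecidableEq F]

theorem hammingDist_repetition_separatingVector (v : ι → F) :
    hammingDist (repetition C v) (separatingVector C) =
      ∑ i, repetitionCounts C i * hammingDist v (codewordEnum C i) := by
  rw [← hammingNorm_sub_eq_hammingDist]
  exact (hammingNorm_blockRepeat (repetitionCounts C) fun i => v - codewordEnum C i).trans
    (by simp only [hammingNorm_sub_eq_hammingDist])

theorem injOn_hammingDist_separatingVector :
    Set.InjOn (fun w => hammingDist w (separatingVector C)) (C.map (repetition C)) := by
  rintro _ ⟨c, hc, rfl⟩ _ ⟨c', hc', rfl⟩ h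
  rw [← range_codewordEnum] at hc hc'
  beta_reduce at h
  rw [hammingDist_repetition_separatingVector, hammingDist_repetition_separatingVector] at h
  rw [injOn_sum_pow_mul_hammingDist _ (Nat.lt_succ_self _) hc hc' h]

theorem ncard_weights_map_repetition :
    (weights (C.map (repetition C))).ncard = (weights C).ncard := by
  have hpos : 0 < ∑ i, repetitionCounts C i :=
    Finset.sum_pos (fun i _ => pow_pos (Nat.succ_pos _) _)
      (Finset.univ_nonempty_iff.mpr (Fin.pos_iff_nonempty.mp Nat.card_pos))
  rw [weights_map C (repetition_injective C) (hammingNorm_repetition C),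
    Set.ncard_image_of_injective _ fun a b h => Nat.eq_of_mul_eq_mul_left hpos h]

end Repetition

theorem add_qk_weights {F : Type*} [Field F] [Fintype F] [DecidableEq F] (k s : ℕ)
    (h : ∃ (n : ℕ) (C : Submodule F (Fin n → F)), Module.finrank F C = k ∧
      {w : ℕ | ∃ c ∈ C, c ≠ 0 ∧ hammingNorm c = w}.ncard = s) :
    ∃ (n' : ℕ) (C' : Submodule F (Fin n' → F)), Module.finrank F C' = k + 1 ∧
      {w : ℕ | ∃ c ∈ C', c ≠ 0 ∧ hammingNorm c = w}.ncard = Fintype.card F ^ k + s := by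
  obtain ⟨n, C, hk, hs⟩ := h
  let e := Submodule.equivMapOfInjective _ (repetition_injective C) C
  obtain ⟨n', C', hrank, hweights⟩ := exists_fin_code <| LinearMap.range <|
    augment (C.map (repetition C)) (separatingVector C) (Option (RepetitionIndex C))
  refine ⟨n', C', ?_, ?_⟩
  · rw [hrank, finrank_range_augment, ← e.finrank_eq, hk]
  · change (weights C').ncard = _
    change (weights C).ncard = s at hs
    have hcard : Nat.card C = Fintype.card F ^ k := by
      rw [Module.natCard_eq_pow_finrank (K := F), hk, Nat.card_eq_fintype_card]
    rw [hweights, ncard_weights_range_augment (by simp) (injOn_hammingDist_separatingVector C),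
      ← Nat.card_congr e.toEquiv, ncard_weights_map_repetition, hs, hcard]
end

section
/- For every positive integer k and every integer s with 1 ≤ s ≤ 2^k - 1, there exists a binary linear code of dimension k with exactly s distinct nonzero Hamming weights. -/
open Finset

lemma sum_testBit (t : ℕ) : ∀ u < 2^t, ∑ i ∈ Finset.range t, (if u.testBit i then 2^i else 0) = u := by
  induction t with
  | zero => intro u hu; interval_cases u; simp
  | succ t ih =>
    intro u hu
    rw [Finset.sum_range_succ]
    have hmod : ∀ i ∈ Finset.range t, (if u.testBit i then 2^i else 0)
        = (if (u % 2^t).testBit i then 2^i else 0) := by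
      intro i hi
      rw [Nat.testBit_mod_two_pow]
      simp [Finset.mem_range.mp hi]
    rw [Finset.sum_congr rfl hmod, ih (u % 2^t) (Nat.mod_lt _ (by positivity))]
    by_cases h : u < 2^t
    · rw [Nat.testBit_lt_two_pow h, Nat.mod_eq_of_lt h]; simp
    · push_neg at h
      have hpow : 2 ^ (t+1) = 2 ^ t * 2 := by ring
      have hdiv : u / 2^t = 1 := by
        have h1 : u / 2^t < 2 := Nat.div_lt_of_lt_mul (by omega)
        have h2 : 1 ≤ u / 2^t := (Nat.one_le_div_iff (by positivity)).mpr h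
        omega
      have ht : u.testBit t = true := by
        rw [Nat.testBit_eq_decide_div_mod_eq, hdiv]
        rfl
      rw [ht]
      simp only [if_true]
      have : u % 2^t = u - 2^t := by
        rw [Nat.mod_eq_sub_mod h, Nat.mod_eq_of_lt (by omega)]
      rw [this]
      exact Nat.sub_add_cancel h

lemma zmod2_eq_one (a : ZMod 2) (h : a ≠ 0) : a = 1 := by
  fin_cases a
  · exact absurd rfl h
  · rfl

lemma card_dot {k : ℕ} (hk : 1 ≤ k) (x : Fin k → ZMod 2) (hx : x ≠ 0) :
    (Finset.univ.filter fun y : Fin k → ZMod 2 => dotProduct x y ≠ 0).card = 2^(k-1) := by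
  classical
  obtain ⟨j, hj⟩ : ∃ j, x j ≠ 0 := by
    by_contra h; push_neg at h; exact hx (funext h)
  set y₀ : Fin k → ZMod 2 := Pi.single j 1 with hy₀def
  have hy₀ : dotProduct x y₀ = 1 := by
    rw [hy₀def, dotProduct_single, mul_one]
    exact zmod2_eq_one _ hj
  have key : (Finset.univ.filter fun y : Fin k → ZMod 2 => dotProduct x y ≠ 0).card
      = (Finset.univ.filter fun y : Fin k → ZMod 2 => ¬ (dotProduct x y ≠ 0)).card := by
    have hinv : ∀ y : Fin k → ZMod 2, y + y₀ + y₀ = y := by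
      intro y
      funext i
      simp only [Pi.add_apply, add_assoc, CharTwo.add_self_eq_zero, add_zero]
    refine Finset.card_bij' (fun y _ => y + y₀) (fun y _ => y + y₀) ?_ ?_ ?_ ?_
    · intro y hy
      simp only [Finset.mem_filter, Finset.mem_univ, true_and, not_not] at hy ⊢
      rw [dotProduct_add, hy₀, zmod2_eq_one _ hy]
      decide
    · intro y hy
      simp only [Finset.mem_filter, Finset.mem_univ, true_and, not_not] at hy ⊢
      rw [dotProduct_add, hy₀, hy]
      decide
    · intro y _
      exact hinv y
    · intro y _
      exact hinv y
  have hsum := Finset.card_filter_add_card_filter_not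
    (s := (Finset.univ : Finset (Fin k → ZMod 2)))
    (p := fun y => dotProduct x y ≠ 0)
  have hcard : (Finset.univ : Finset (Fin k → ZMod 2)).card = 2^k := by
    simp [Finset.card_univ]
  have h2 : 2^k = 2 * 2^(k-1) := by
    rw [← pow_succ']; congr 1; omega
  omega

/-- The column multiplicity function. -/
def myA (k t r : ℕ) : Fin k → ℕ :=
  fun i => (if i.1 < t then 2^i.1 else 0) + (if i.1 = t then r else 0)

/-- the weight contribution of the extra columns -/
def myG (k t r : ℕ) (x : Fin k → ZMod 2) : ℕ :=
  ∑ i : Fin k, if x i ≠ 0 then myA k t r i else 0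

lemma sum_ite_eq_t {k t r : ℕ} (ht : t < k) (c : Fin k → Prop) [DecidablePred c] :
    ∑ i : Fin k, (if c i ∧ i.1 = t then r else 0) = (if c ⟨t, ht⟩ then r else 0) := by
  rw [Finset.sum_eq_single_of_mem ⟨t, ht⟩ (Finset.mem_univ _)]
  · simp
  · intro b _ hb
    have : b.1 ≠ t := fun h => hb (Fin.ext h)
    simp [this]

lemma sum_myA {k t r : ℕ} (ht : t < k) (c : Fin k → Prop) [DecidablePred c] :
    ∑ i : Fin k, (if c i then myA k t r i else 0)
      = (∑ i : Fin k, if c i ∧ i.1 < t then 2^i.1 else 0) + (if c ⟨t, ht⟩ then r else 0) := by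
  have h1 : ∀ i : Fin k, (if c i then myA k t r i else 0)
      = (if c i ∧ i.1 < t then 2^i.1 else 0) + (if c i ∧ i.1 = t then r else 0) := by
    intro i; unfold myA; by_cases h : c i <;> simp [h]
  rw [Finset.sum_congr rfl (fun i _ => h1 i), Finset.sum_add_distrib, sum_ite_eq_t ht c]

lemma sum_bits {k t : ℕ} (htk : t ≤ k) (u : ℕ) :
    (∑ i : Fin k, if i.1 < t ∧ u.testBit i.1 then 2^i.1 else 0)
      = ∑ m ∈ Finset.range t, (if u.testBit m then 2^m else 0) := by
  rw [Fin.sum_univ_eq_sum_range (fun m => if m < t ∧ u.testBit m then 2^m else 0) k]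
  rw [← Finset.sum_subset (Finset.range_subset_range.mpr htk)
      (fun m _ hm => by
        have : ¬ m < t := by simpa using hm
        simp [this])]
  exact Finset.sum_congr rfl (fun m hm => by simp [Finset.mem_range.mp hm])

lemma ite_one_ne_zero (p : Prop) [Decidable p] : ((if p then (1 : ZMod 2) else 0) ≠ 0) ↔ p := by
  split <;> simp_all

lemma sum_geom_two (n : ℕ) : ∑ i ∈ Finset.range n, 2^i = 2^n - 1 := by
  induction n with
  | zero => simp
  | succ n ih => rw [Finset.sum_range_succ, ih]; have : 1 ≤ 2^n := Nat.one_le_two_pow; omega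

lemma myG_image {k t r lo : ℕ} (ht : t < k) (hlo : lo = if k = t+1 then 1 else 0)
    (hrlo : lo ≤ r) (hr : r ≤ 2^t) :
    myG k t r '' {x : Fin k → ZMod 2 | x ≠ 0} = Set.Ico lo (2^t + r) := by
  classical
  have h2t : 1 ≤ 2^t := Nat.one_le_two_pow
  have htot : ∑ i : Fin k, myA k t r i = 2^t - 1 + r := by
    unfold myA
    rw [Finset.sum_add_distrib]
    congr 1
    · rw [Fin.sum_univ_eq_sum_range (fun m => if m < t then 2^m else 0) k,
        ← Finset.sum_subset (Finset.range_subset_range.mpr ht.le) (fun m _ hm => by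
          have : ¬ m < t := by simpa using hm
          simp [this])]
      rw [← sum_geom_two t]
      exact Finset.sum_congr rfl (fun m hm => by simp [Finset.mem_range.mp hm])
    · rw [Finset.sum_eq_single_of_mem ⟨t, ht⟩ (Finset.mem_univ _) (fun b _ hb => by
        have : b.1 ≠ t := fun h => hb (Fin.ext h)
        simp [this])]
      simp
  ext v
  simp only [Set.mem_image, Set.mem_setOf_eq, Set.mem_Ico]
  constructor
  · rintro ⟨x, hx, rfl⟩
    constructor
    · -- lower bound
      rcases Nat.eq_zero_or_pos lo with h0 | h1
      · omega
      · have hk1 : k = t + 1 := by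
          by_contra h
          rw [if_neg h] at hlo
          omega
        rw [if_pos hk1] at hlo
        obtain ⟨j, hj⟩ : ∃ j, x j ≠ 0 := by
          by_contra h; push_neg at h; exact hx (funext h)
        have haj : 1 ≤ myA k t r j := by
          unfold myA
          have hj1 : 1 ≤ 2 ^ j.1 := Nat.one_le_two_pow
          have hjk := j.isLt
          have hcase : j.1 < t ∨ j.1 = t := by omega
          rcases hcase with h | h
          · rw [if_pos h]
            omega
          · rw [if_pos h, if_neg (by omega)]
            omega
        have hle : (if x j ≠ 0 then myA k t r j else 0)
            ≤ ∑ i : Fin k, (if x i ≠ 0 then myA k t r i else 0) :=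
          Finset.single_le_sum (f := fun i => if x i ≠ 0 then myA k t r i else 0)
            (fun i _ => Nat.zero_le _) (Finset.mem_univ j)
        rw [if_pos hj] at hle
        unfold myG
        omega
    · -- upper bound
      have hb : myG k t r x ≤ ∑ i : Fin k, myA k t r i := by
        unfold myG
        exact Finset.sum_le_sum (fun i _ => by split <;> simp)
      rw [htot] at hb
      omega
  · rintro ⟨hv1, hv2⟩
    by_cases hv0 : v = 0
    · -- use a zero column: k ≥ t+2 in this case
      have hk1 : k ≠ t + 1 := by
        intro h; rw [if_pos h] at hlo; omega
      have hkt : t + 1 < k := by omega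
      set y0 : Fin k → ZMod 2 := Pi.single ⟨k-1, by omega⟩ 1 with hy0
      refine ⟨y0, ?_, ?_⟩
      · intro h
        have := congrFun h ⟨k-1, by omega⟩
        simp [hy0, Pi.single_apply] at this
      · unfold myG
        have hcond : ∀ i : Fin k, (y0 i ≠ 0)
            ↔ i = ⟨k-1, by omega⟩ := by
          intro i
          rw [hy0, Pi.single_apply]
          exact ite_one_ne_zero _
        rw [Finset.sum_congr rfl (fun i _ => by rw [if_congr (hcond i) rfl rfl])]
        rw [Finset.sum_eq_single_of_mem ⟨k-1, by omega⟩ (Finset.mem_univ _)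
          (fun b _ hb => by simp [hb])]
        rw [if_pos rfl]
        unfold myA
        rw [if_neg (by simp; omega), if_neg (by simp; omega)]
        omega
    · -- v ≥ 1
      set u : ℕ := if 2^t ≤ v then v - r else v with hu
      have hult : u < 2^t := by
        rw [hu]; split <;> omega
      set x : Fin k → ZMod 2 :=
        fun i => if (i.1 < t ∧ u.testBit i.1) ∨ (i.1 = t ∧ 2^t ≤ v) then 1 else 0 with hxdef
      have hxcond : ∀ i : Fin k, (x i ≠ 0) ↔ ((i.1 < t ∧ u.testBit i.1) ∨ (i.1 = t ∧ 2^t ≤ v)) := by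
        intro i; rw [hxdef]; exact ite_one_ne_zero _
      have hxne : x ≠ 0 := by
        intro h0
        by_cases h2 : 2^t ≤ v
        · have := congrFun h0 ⟨t, ht⟩
          simp [hxdef, h2] at this
        · have hu1 : 1 ≤ u := by rw [hu, if_neg h2]; omega
          have hz : ∀ m ∈ Finset.range t, (if u.testBit m then 2^m else 0) = 0 := by
            intro m hm
            have hmt := Finset.mem_range.mp hm
            have hx0 := congrFun h0 ⟨m, lt_trans hmt ht⟩
            by_cases hb : u.testBit m
            · exfalso
              simp [hxdef, hmt, hb] at hx0
            · simp [hb]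
          have hsum := sum_testBit t u hult
          rw [Finset.sum_eq_zero hz] at hsum
          omega
      have hgx : myG k t r x = v := by
        unfold myG
        rw [Finset.sum_congr rfl (fun i _ => by rw [if_congr (hxcond i) rfl rfl])]
        rw [sum_myA ht]
        have e1 : ∀ i : Fin k,
            ((((i.1 < t ∧ u.testBit i.1) ∨ (i.1 = t ∧ 2^t ≤ v)) ∧ i.1 < t)
              ↔ (i.1 < t ∧ u.testBit i.1)) := by
          intro i
          constructor
          · rintro ⟨h | h, hlt⟩
            · exact ⟨hlt, h.2⟩
            · omega
          · intro h
            exact ⟨Or.inl h, h.1⟩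
        rw [Finset.sum_congr rfl (fun i _ => by rw [if_congr (e1 i) rfl rfl])]
        rw [sum_bits ht.le u, sum_testBit t u hult]
        have e2 : (((t:ℕ) < t ∧ u.testBit t) ∨ (t = t ∧ 2^t ≤ v)) ↔ 2^t ≤ v := by
          constructor
          · rintro (⟨h, _⟩ | ⟨_, h⟩)
            · omega
            · exact h
          · intro h; exact Or.inr ⟨rfl, h⟩
        rw [if_congr e2 rfl rfl]
        by_cases h2 : 2^t ≤ v
        · rw [if_pos h2, hu, if_pos h2]
          omega
        · rw [if_neg h2, hu, if_neg h2]
          omega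
      exact ⟨x, hxne, hgx⟩

abbrev colIdx (k : ℕ) (a : Fin k → ℕ) : Type := (Fin k → ZMod 2) ⊕ ((i : Fin k) × Fin (a i))

def phiMap (k : ℕ) (a : Fin k → ℕ) : (Fin k → ZMod 2) →ₗ[ZMod 2] (colIdx k a → ZMod 2) where
  toFun x := Sum.elim (fun y => dotProduct x y) (fun p => x p.1)
  map_add' x x' := by
    funext i
    cases i with
    | inl y => simp [add_dotProduct]
    | inr p => simp
  map_smul' c x := by
    funext i
    cases i with
    | inl y => simp [smul_dotProduct]
    | inr p => simp

lemma phiMap_inj (k : ℕ) (a : Fin k → ℕ) : Function.Injective (phiMap k a) := by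
  intro x x' h
  funext j
  have := congrFun h (Sum.inl (Pi.single j 1))
  simpa [phiMap, dotProduct_single] using this

lemma sigma_sum {k : ℕ} (a : Fin k → ℕ) (x : Fin k → ZMod 2) :
    ∑ p : (i : Fin k) × Fin (a i), (if x p.1 ≠ 0 then (1:ℕ) else 0)
      = ∑ i : Fin k, (if x i ≠ 0 then a i else 0) := by
  classical
  rw [← Finset.univ_sigma_univ, Finset.sum_sigma]
  refine Finset.sum_congr rfl (fun i _ => ?_)
  split <;> simp [Finset.sum_const, mul_comm]

lemma norm_phiMap {k : ℕ} (hk : 1 ≤ k) (a : Fin k → ℕ) (x : Fin k → ZMod 2) (hx : x ≠ 0) :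
    hammingNorm (phiMap k a x) = 2^(k-1) + ∑ i : Fin k, (if x i ≠ 0 then a i else 0) := by
  classical
  rw [show hammingNorm (phiMap k a x)
      = (Finset.univ.filter fun i : colIdx k a => (phiMap k a x) i ≠ 0).card from rfl]
  rw [Finset.card_filter, Fintype.sum_sum_type]
  congr 1
  · rw [← Finset.card_filter, ← card_dot hk x hx]
    congr 1
  · calc ∑ p : (i : Fin k) × Fin (a i), (if (phiMap k a x) (Sum.inr p) ≠ 0 then (1:ℕ) else 0)
        = ∑ p : (i : Fin k) × Fin (a i), (if x p.1 ≠ 0 then (1:ℕ) else 0) := rfl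
      _ = ∑ i : Fin k, (if x i ≠ 0 then a i else 0) := sigma_sum a x

lemma norm_reindex {n : ℕ} {I : Type*} [Fintype I] [DecidableEq I] (e : Fin n ≃ I)
    (c : I → ZMod 2) : hammingNorm (fun j => c (e j)) = hammingNorm c := by
  rw [show hammingNorm (fun j => c (e j))
      = (Finset.univ.filter fun j : Fin n => c (e j) ≠ 0).card from rfl,
    show hammingNorm c = (Finset.univ.filter fun i : I => c i ≠ 0).card from rfl]
  exact Finset.card_equiv e (fun j => by simp)

theorem binary_all_weight_counts (k s : ℕ) (hk : 1 ≤ k) (hs : 1 ≤ s) (hs' : s ≤ 2 ^ k - 1) :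
    ∃ (n : ℕ) (C : Submodule (ZMod 2) (Fin n → ZMod 2)), Module.finrank (ZMod 2) C = k ∧
      {w : ℕ | ∃ c ∈ C, c ≠ 0 ∧ hammingNorm c = w}.ncard = s := by
  classical
  set t := Nat.log2 s with htdef
  have hst : 2^t ≤ s := Nat.log2_self_le (by omega)
  have hst2 : s < 2^(t+1) := Nat.lt_log2_self
  have h2k1 : 1 ≤ 2^k := Nat.one_le_two_pow
  have h2k : s < 2^k := by omega
  have htk : t < k := by
    by_contra h
    push_neg at h
    have : 2^k ≤ 2^t := Nat.pow_le_pow_right (by norm_num) h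
    omega
  set lo := if k = t+1 then 1 else 0 with hlo
  have hlo1 : lo ≤ 1 := by rw [hlo]; split <;> omega
  set r := s - 2^t + lo with hr
  have hrlo : lo ≤ r := by omega
  have hrle : r ≤ 2^t := by
    have : 2^(t+1) = 2^t + 2^t := by ring
    omega
  set a : Fin k → ℕ := myA k t r with ha
  set I := colIdx k a with hI
  set n := Fintype.card I with hn
  set e : Fin n ≃ I := (Fintype.equivFin I).symm with he
  set ψ : (Fin k → ZMod 2) →ₗ[ZMod 2] (Fin n → ZMod 2) :=
    (LinearEquiv.funCongrLeft (ZMod 2) (ZMod 2) e).toLinearMap.comp (phiMap k a) with hψ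
  have hinj : Function.Injective ψ := by
    rw [hψ]
    exact (LinearEquiv.funCongrLeft (ZMod 2) (ZMod 2) e).injective.comp (phiMap_inj k a)
  refine ⟨n, LinearMap.range ψ, ?_, ?_⟩
  · rw [LinearMap.finrank_range_of_inj hinj, Module.finrank_pi]
    simp
  · have hnorm : ∀ x : Fin k → ZMod 2, hammingNorm (ψ x) = hammingNorm (phiMap k a x) := by
      intro x
      have hψx : ψ x = fun j => (phiMap k a x) (e j) := rfl
      rw [hψx]
      exact norm_reindex e _
    have hset : {w : ℕ | ∃ c ∈ LinearMap.range ψ, c ≠ 0 ∧ hammingNorm c = w}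
        = (fun v => 2^(k-1) + v) '' (myG k t r '' {x : Fin k → ZMod 2 | x ≠ 0}) := by
      ext w
      simp only [Set.mem_setOf_eq, Set.mem_image, LinearMap.mem_range]
      constructor
      · rintro ⟨c, ⟨x, rfl⟩, hc0, rfl⟩
        have hx0 : x ≠ 0 := by rintro rfl; exact hc0 (map_zero ψ)
        refine ⟨myG k t r x, ⟨x, hx0, rfl⟩, ?_⟩
        rw [hnorm x, norm_phiMap hk a x hx0]
        rfl
      · rintro ⟨v, ⟨x, hx0, rfl⟩, rfl⟩
        refine ⟨ψ x, ⟨x, rfl⟩, ?_, ?_⟩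
        · intro h; exact hx0 (hinj (by rw [h, map_zero]))
        · rw [hnorm x, norm_phiMap hk a x hx0]
          rfl
    rw [hset, Set.ncard_image_of_injective _ (add_right_injective _),
      myG_image htk hlo hrlo hrle, ← Finset.coe_Ico, Set.ncard_coe_finset, Nat.card_Ico]
    omega
end

section
/- For a prime power q ≥ 2 and dimension k = 2, there exists a linear code over GF(q) of dimension 2 with exactly q + 2 distinct weights (including the zero weight), which equals the maximum (q^2-1)/(q-1) + 1. -/
open Finset

section MWSAux

variable (F : Type*) [Field F] [Fintype F] [DecidableEq F]

/-- multiplicities of the columns, one per projective point of `P(F²)`. -/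
noncomputable def mwsM : Option F → ℕ
  | none => Fintype.card F
  | some x => (Fintype.equivFin F x : ℕ)

/-- the index type of coordinates -/
abbrev MwsIdx := Σ x : Option F, Fin (mwsM F x)

/-- the linear functional attached to each projective point -/
def mwsG : Option F → F × F → F
  | none, p => p.1
  | some x, p => p.1 * x + p.2

/-- the generator map of the code -/
def mwsPhi : (F × F) →ₗ[F] (MwsIdx F → F) where
  toFun p i := mwsG F i.1 p
  map_add' p q := by
    funext i
    rcases i with ⟨_ | x, j⟩ <;> simp [mwsG] <;> ring
  map_smul' c p := by
    funext i
    rcases i with ⟨_ | x, j⟩ <;> simp [mwsG] <;> ring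

variable {F}

/-- the projective point where a nonzero vector's functional vanishes -/
def mwsZeroline (p : F × F) : Option F :=
  if p.1 = 0 then none else some (-p.2 / p.1)

lemma mwsG_eq_zero_iff {p : F × F} (hp : p ≠ 0) (x : Option F) :
    mwsG F x p = 0 ↔ x = mwsZeroline p := by
  obtain ⟨a, b⟩ := p
  by_cases ha : a = 0
  · subst ha
    have hb : b ≠ 0 := by
      intro h; exact hp (by simp [Prod.ext_iff, h])
    cases x <;> simp [mwsG, mwsZeroline, hb]
  · cases x with
    | none => simp [mwsG, mwsZeroline, ha]
    | some y =>
      simp only [mwsG, mwsZeroline, if_neg ha, Option.some.injEq]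
      constructor
      · intro h
        field_simp
        linear_combination h
      · intro h
        subst h
        field_simp
        ring
end MWSAux

section MWSAux2

variable {F : Type*} [Field F] [Fintype F] [DecidableEq F]

lemma mwsM_le (x : Option F) : mwsM F x ≤ Fintype.card F := by
  cases x with
  | none => exact le_refl _
  | some y => exact le_of_lt (Fintype.equivFin F y).2

lemma mwsM_inj : Function.Injective (mwsM F) := by
  intro x y h
  cases x with
  | none =>
    cases y with
    | none => rfl
    | some b => exact absurd h.symm (Nat.ne_of_lt (Fintype.equivFin F b).2)
  | some a =>
    cases y with
    | none => exact absurd h (Nat.ne_of_lt (Fintype.equivFin F a).2)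
    | some b =>
      have := (Fintype.equivFin F).injective (Fin.val_injective h)
      rw [this]

lemma mws_card_eq : Fintype.card (MwsIdx F) = ∑ x : Option F, mwsM F x := by
  simp [Fintype.card_sigma]

lemma mws_card_lt (hq : 2 ≤ Fintype.card F) :
    Fintype.card F < Fintype.card (MwsIdx F) := by
  rw [mws_card_eq, Fintype.sum_option]
  have h1 : (1 : ℕ) ≤ ∑ x : F, mwsM F (some x) := by
    have hx : mwsM F (some ((Fintype.equivFin F).symm ⟨1, by omega⟩)) = 1 := by
      simp [mwsM]
    calc (1:ℕ) = mwsM F (some ((Fintype.equivFin F).symm ⟨1, by omega⟩)) := hx.symm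
      _ ≤ ∑ x : F, mwsM F (some x) :=
        Finset.single_le_sum (f := fun x : F => mwsM F (some x))
          (fun i _ => Nat.zero_le _) (Finset.mem_univ _)
  have : mwsM F none = Fintype.card F := rfl
  omega

lemma card_filter_fst_eq (x₀ : Option F) :
    (Finset.univ.filter fun i : MwsIdx F => i.1 = x₀).card = mwsM F x₀ := by
  have h : (Finset.univ.filter fun i : MwsIdx F => i.1 = x₀)
      = ({x₀} : Finset (Option F)).sigma (fun x => Finset.univ) := by
    ext ⟨x, j⟩
    simp [Finset.mem_sigma, eq_comm]
  rw [h, Finset.card_sigma]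
  simp

lemma mws_weight {p : F × F} (hp : p ≠ 0) :
    hammingNorm (mwsPhi F p) = Fintype.card (MwsIdx F) - mwsM F (mwsZeroline p) := by
  have h1 : (Finset.univ.filter fun i : MwsIdx F => mwsPhi F p i ≠ 0)
      = Finset.univ.filter fun i : MwsIdx F => ¬ (i.1 = mwsZeroline p) := by
    apply Finset.filter_congr
    intro i _
    simp only [ne_eq, not_iff_not]
    exact mwsG_eq_zero_iff hp i.1
  have h2 : hammingNorm (mwsPhi F p)
      = (Finset.univ.filter fun i : MwsIdx F => ¬ (i.1 = mwsZeroline p)).card := by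
    rw [← h1]; rfl
  rw [h2, Finset.filter_not, Finset.card_sdiff_of_subset (Finset.filter_subset _ _),
    card_filter_fst_eq, Finset.card_univ]

lemma hammingNorm_comp_equiv_s15 {ι κ : Type*} [Fintype ι] [Fintype κ] [DecidableEq ι]
    [DecidableEq κ] (e : ι ≃ κ) (f : κ → F) : hammingNorm (f ∘ e) = hammingNorm f := by
  apply Finset.card_equiv e
  intro i
  simp

end MWSAux2

theorem dim_two_MWS {F : Type*} [Field F] [Fintype F] [DecidableEq F] :
    ∃ (n : ℕ) (C : Submodule F (Fin n → F)), Module.finrank F C = 2 ∧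
      {w : ℕ | ∃ c ∈ C, hammingNorm c = w}.ncard = Fintype.card F + 2 ∧
      Fintype.card F + 2 = (Fintype.card F ^ 2 - 1) / (Fintype.card F - 1) + 1 := by
  classical
  have hq2 : 2 ≤ Fintype.card F := Fintype.one_lt_card
  set q := Fintype.card F with hqdef
  set n := Fintype.card (MwsIdx F) with hndef
  have hqn : q < n := mws_card_lt hq2
  set e : Fin n ≃ MwsIdx F := (Fintype.equivFin (MwsIdx F)).symm with hedef
  set ψ : (F × F) →ₗ[F] (Fin n → F) :=
    (LinearEquiv.funCongrLeft F F e).toLinearMap ∘ₗ mwsPhi F with hψdef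
  have hψ_apply : ∀ p : F × F, ψ p = (mwsPhi F p) ∘ e := fun p => rfl
  have hψ_norm : ∀ p : F × F, hammingNorm (ψ p) = hammingNorm (mwsPhi F p) := by
    intro p
    rw [hψ_apply]
    exact hammingNorm_comp_equiv_s15 e _
  have hψ_weight : ∀ p : F × F, p ≠ 0 →
      hammingNorm (ψ p) = n - mwsM F (mwsZeroline p) := by
    intro p hp
    rw [hψ_norm, mws_weight hp]
  have hψ_inj : Function.Injective ψ := by
    rw [injective_iff_map_eq_zero ψ]
    intro p hp0
    by_contra hp
    have h1 : hammingNorm (ψ p) = n - mwsM F (mwsZeroline p) := hψ_weight p hp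
    have h2 : hammingNorm (ψ p) = 0 := by rw [hp0, hammingNorm_zero]
    have h3 : mwsM F (mwsZeroline p) ≤ q := mwsM_le _
    omega
  refine ⟨n, LinearMap.range ψ, ?_, ?_, ?_⟩
  · rw [LinearMap.finrank_range_of_inj hψ_inj]
    simp [Module.finrank_prod]
  · have hset : {w : ℕ | ∃ c ∈ LinearMap.range ψ, hammingNorm c = w}
        = insert 0 ((fun x : Option F => n - mwsM F x) '' Set.univ) := by
      ext w
      simp only [Set.mem_setOf_eq, Set.mem_insert_iff, Set.mem_image, Set.mem_univ, true_and]
      constructor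
      · rintro ⟨c, ⟨p, rfl⟩, rfl⟩
        by_cases hp : p = 0
        · left; rw [hp, map_zero, hammingNorm_zero]
        · right; exact ⟨mwsZeroline p, (hψ_weight p hp).symm⟩
      · rintro (rfl | ⟨x, rfl⟩)
        · exact ⟨0, ⟨0, map_zero ψ⟩, hammingNorm_zero⟩
        · refine ⟨ψ (Option.elim x (0, 1) fun y => (1, -y)), ⟨_, rfl⟩, ?_⟩
          have hpne : (Option.elim x (0, 1) fun y => (1, -y) : F × F) ≠ 0 := by
            cases x <;> simp [Prod.ext_iff]
          rw [hψ_weight _ hpne]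
          congr 1
          cases x with
          | none => simp [mwsZeroline]
          | some y => simp [mwsZeroline]
    rw [hset]
    have hMle : ∀ x : Option F, mwsM F x ≤ q := mwsM_le
    have hinj : Function.Injective (fun x : Option F => n - mwsM F x) := by
      intro x y h
      apply mwsM_inj
      have hx := hMle x
      have hy := hMle y
      simp only at h
      omega
    have h0 : (0 : ℕ) ∉ (fun x : Option F => n - mwsM F x) '' Set.univ := by
      rintro ⟨x, -, hx⟩
      have := hMle x
      simp only at hx
      omega
    rw [Set.ncard_insert_of_notMem h0 (Set.toFinite _),
      Set.ncard_image_of_injective _ hinj, Set.ncard_univ, Nat.card_eq_fintype_card,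
      Fintype.card_option]
  · obtain ⟨m, hm⟩ : ∃ m, q = m + 2 := ⟨q - 2, by omega⟩
    rw [hm]
    have h2 : (m + 1) * (m + 3) = m ^ 2 + 4 * m + 3 := by ring
    have h3 : (m + 2) ^ 2 = m ^ 2 + 4 * m + 4 := by ring
    have h1 : (m + 2) ^ 2 - 1 = (m + 1) * (m + 3) := by omega
    have h4 : m + 2 - 1 = m + 1 := rfl
    rw [h4, h1, Nat.mul_div_cancel_left _ (by omega : 0 < m + 1)]
end

section
/- If C is a linear code over GF(q) in which some two distinct codewords c_1, c_2 satisfy d(c_1, x) = d(c_2, x) = t for a vector x, and C', c_1', c_2', x^{(3)} denote their coordinate-tripled versions, then d(c_1', x^{(3)}) = d(c_2', x^{(3)}) = 3t, and there exists a vector x' differing from x^{(3)} in exactly one coordinate (when q ≥ 3) such that d(c_1', x') ≠ d(c_2', x') and |d(c_i', x') - 3t| ≤ 1 for i = 1,2. -/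
lemma triple_dist {F : Type*} [Field F] [DecidableEq F] {n : ℕ} (v w : Fin n → F) :
    hammingDist (tripleMap F n v) (tripleMap F n w) = 3 * hammingDist v w := by
  classical
  unfold hammingDist
  rw [← Fintype.card_subtype, ← Fintype.card_subtype]
  have e : {i : Fin (3 * n) // tripleMap F n v i ≠ tripleMap F n w i} ≃
      Fin 3 × {j : Fin n // v j ≠ w j} :=
    { toFun := fun i => (⟨i.1.1 % 3, by omega⟩, ⟨⟨i.1.1 / 3, by have := i.1.2; omega⟩, i.2⟩)
      invFun := fun p => ⟨⟨3 * p.2.1.1 + p.1.1, by have := p.2.1.2; have := p.1.2; omega⟩, by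
        have h : (3 * p.2.1.1 + p.1.1) / 3 = p.2.1.1 := by have := p.1.2; omega
        show v ⟨_, _⟩ ≠ w ⟨_, _⟩
        simp only [h]
        exact p.2.2⟩
      left_inv := fun i => by
        apply Subtype.ext; apply Fin.ext; simp; omega
      right_inv := fun p => by
        have := p.1.2
        ext <;> simp <;> omega }
  rw [Fintype.card_congr e, Fintype.card_prod, Fintype.card_fin]

section updates
variable {F : Type*} [DecidableEq F] {m : ℕ} (v w : Fin m → F) (i : Fin m) (a : F)

lemma filter_update_erase :
    ({k | v k ≠ Function.update w i a k} : Finset (Fin m)).erase i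
      = ({k | v k ≠ w k} : Finset (Fin m)).erase i := by
  ext k
  simp only [Finset.mem_erase, Finset.mem_filter, Finset.mem_univ, true_and]
  constructor
  · rintro ⟨hk, h⟩; rw [Function.update_of_ne hk] at h; exact ⟨hk, h⟩
  · rintro ⟨hk, h⟩; rw [Function.update_of_ne hk]; exact ⟨hk, h⟩

lemma dist_update_eq_ne (h : v i = w i) (ha : v i ≠ a) :
    hammingDist v (Function.update w i a) = hammingDist v w + 1 := by
  unfold hammingDist
  have hi : i ∈ ({k | v k ≠ Function.update w i a k} : Finset (Fin m)) := by
    simp [ha]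
  have hi' : i ∉ ({k | v k ≠ w k} : Finset (Fin m)) := by simp [h]
  rw [← Finset.card_erase_add_one hi, filter_update_erase, Finset.erase_eq_of_notMem hi']

lemma dist_update_ne_eq (h : v i ≠ w i) (ha : v i = a) :
    hammingDist v (Function.update w i a) + 1 = hammingDist v w := by
  unfold hammingDist
  have hi : i ∉ ({k | v k ≠ Function.update w i a k} : Finset (Fin m)) := by
    simp [ha]
  have hi' : i ∈ ({k | v k ≠ w k} : Finset (Fin m)) := by simp [h]
  rw [← Finset.card_erase_add_one hi', ← filter_update_erase v w i a,
    Finset.erase_eq_of_notMem hi]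

lemma dist_update_ne_ne (h : v i ≠ w i) (ha : v i ≠ a) :
    hammingDist v (Function.update w i a) = hammingDist v w := by
  unfold hammingDist
  congr 1
  ext k
  rcases eq_or_ne k i with rfl | hk
  · simp [ha, h]
  · simp [Function.update_of_ne hk]

end updates

theorem tripled_tie_breaking {F : Type*} [Field F] [Fintype F] [DecidableEq F] {n t : ℕ}
    (hq : 3 ≤ Fintype.card F)
    (C : Submodule F (Fin n → F)) (c₁ c₂ : Fin n → F) (hc₁ : c₁ ∈ C) (hc₂ : c₂ ∈ C)
    (hne : c₁ ≠ c₂) (x : Fin n → F)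
    (h1 : hammingDist c₁ x = t) (h2 : hammingDist c₂ x = t) :
    hammingDist (tripleMap F n c₁) (tripleMap F n x) = 3 * t ∧
    hammingDist (tripleMap F n c₂) (tripleMap F n x) = 3 * t ∧
    ∃ x' : Fin (3 * n) → F, {i : Fin (3 * n) | x' i ≠ tripleMap F n x i}.ncard = 1 ∧
      hammingDist (tripleMap F n c₁) x' ≠ hammingDist (tripleMap F n c₂) x' ∧
      (3 * t - 1 ≤ hammingDist (tripleMap F n c₁) x' ∧
        hammingDist (tripleMap F n c₁) x' ≤ 3 * t + 1) ∧
      (3 * t - 1 ≤ hammingDist (tripleMap F n c₂) x' ∧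
        hammingDist (tripleMap F n c₂) x' ≤ 3 * t + 1) := by
  classical
  obtain ⟨j, hj⟩ := Function.ne_iff.mp hne
  have d1 : hammingDist (tripleMap F n c₁) (tripleMap F n x) = 3 * t := by
    rw [triple_dist, h1]
  have d2 : hammingDist (tripleMap F n c₂) (tripleMap F n x) = 3 * t := by
    rw [triple_dist, h2]
  refine ⟨d1, d2, ?_⟩
  set i₀ : Fin (3 * n) := ⟨3 * j.1, by have := j.2; omega⟩ with hi₀
  have hval : ∀ c : Fin n → F, tripleMap F n c i₀ = c j := by
    intro c
    show c ⟨3 * j.1 / 3, _⟩ = c j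
    congr 1
    apply Fin.ext
    simp [Nat.mul_div_cancel_left _ (by norm_num : 0 < 3)]
  -- choose a
  have key : ∀ a : F, a ≠ x j →
      ∃ x' : Fin (3 * n) → F, {i : Fin (3 * n) | x' i ≠ tripleMap F n x i}.ncard = 1 ∧
        x' = Function.update (tripleMap F n x) i₀ a := by
    intro a ha
    refine ⟨Function.update (tripleMap F n x) i₀ a, ?_, rfl⟩
    have : {i : Fin (3 * n) | Function.update (tripleMap F n x) i₀ a i ≠ tripleMap F n x i}
        = {i₀} := by
      ext k
      rcases eq_or_ne k i₀ with rfl | hk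
      · simp [Function.update_self, hval, ha]
      · simp [Function.update_of_ne hk, hk]
    rw [this, Set.ncard_singleton]
  rcases eq_or_ne (c₁ j) (x j) with hc1x | hc1x
  · -- c₂ j ≠ x j; take a = c₂ j
    have hc2x : c₂ j ≠ x j := fun h => hj (hc1x.trans h.symm)
    obtain ⟨x', h1card, rfl⟩ := key (c₂ j) hc2x
    have e1 : hammingDist (tripleMap F n c₁) (Function.update (tripleMap F n x) i₀ (c₂ j))
        = 3 * t + 1 := by
      rw [dist_update_eq_ne _ _ _ _ (by simp only [hval]; exact hc1x) (by simp only [hval]; exact hj), d1]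
    have e2 : hammingDist (tripleMap F n c₂) (Function.update (tripleMap F n x) i₀ (c₂ j)) + 1
        = 3 * t := by
      rw [dist_update_ne_eq _ _ _ _ (by simp only [hval]; exact hc2x) (by simp only [hval]), d2]
    refine ⟨_, h1card, ?_, ?_, ?_⟩ <;> omega
  · rcases eq_or_ne (c₂ j) (x j) with hc2x | hc2x
    · obtain ⟨x', h1card, rfl⟩ := key (c₁ j) hc1x
      have e1 : hammingDist (tripleMap F n c₁) (Function.update (tripleMap F n x) i₀ (c₁ j)) + 1
          = 3 * t := by
        rw [dist_update_ne_eq _ _ _ _ (by simp only [hval]; exact hc1x) (by simp only [hval]), d1]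
      have e2 : hammingDist (tripleMap F n c₂) (Function.update (tripleMap F n x) i₀ (c₁ j))
          = 3 * t + 1 := by
        rw [dist_update_eq_ne _ _ _ _ (by simp only [hval]; exact hc2x)
          (by simp only [hval]; exact fun h => hj h.symm), d2]
      refine ⟨_, h1card, ?_, ?_, ?_⟩ <;> omega
    · -- both differ from x j; take a = c₁ j
      obtain ⟨x', h1card, rfl⟩ := key (c₁ j) hc1x
      have e1 : hammingDist (tripleMap F n c₁) (Function.update (tripleMap F n x) i₀ (c₁ j)) + 1
          = 3 * t := by
        rw [dist_update_ne_eq _ _ _ _ (by simp only [hval]; exact hc1x) (by simp only [hval]), d1]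
      have e2 : hammingDist (tripleMap F n c₂) (Function.update (tripleMap F n x) i₀ (c₁ j))
          = 3 * t := by
        rw [dist_update_ne_ne _ _ _ _ (by simp only [hval]; exact hc2x)
          (by simp only [hval]; exact fun h => hj h.symm), d2]
      refine ⟨_, h1card, ?_, ?_, ?_⟩ <;> omega
end
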